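/- arXiv:math/0510555 — 6 statements merged into one kernel-verified Lean document; each statement's English description precedes it below -/
import Mathlib

section
/- Let π : E → M be a smooth submersion, D a smooth horizontal distribution on E, and s₁, s₂ : U → E smooth horizontal sections defined on an open connected subset U of M. If s₁(x) = s₂(x) for some x ∈ U, then s₁ = s₂. -/
open Set Metric ContinuousLinearMap


/-!
STATEMENT 3 (uniqueness of horizontal sections).

Chart picture: the manifolds `E` and `M` are real normed spaces (finite dimensional, as
manifolds are), `π : E → M` is a smooth submersion, and `D : E → Submodule ℝ E` is a smooth
distribution on `E` which is horizontal with respect to `π`, i.e.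
`T_x E = ker (dπ_x) ⊕ D_x` for all `x`.  If `s₁, s₂ : U → E` are smooth horizontal local
sections of `π` defined on an open connected subset `U ⊆ M` which agree at one point of `U`,
then they agree on all of `U`.
-/

/-- A distribution on a normed space is smooth if near each point it is the kernel of a
smooth surjective `ℝᵏ`-valued `1`-form. -/
def IsSmoothDistribution {E : Type*} [NormedAddCommGroup E] [NormedSpace ℝ E]
    (D : E → Submodule ℝ E) : Prop :=
  ∀ x : E, ∃ (k : ℕ) (θ : E → (E →L[ℝ] (Fin k → ℝ))) (U : Set E),
    IsOpen U ∧ x ∈ U ∧ ContDiffOn ℝ (⊤ : ℕ∞) θ U ∧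
    (∀ y ∈ U, Function.Surjective (θ y)) ∧
    (∀ y ∈ U, LinearMap.ker (θ y : E →ₗ[ℝ] (Fin k → ℝ)) = D y)

theorem inverse_eq_symm {X Y : Type*} [NormedAddCommGroup X] [NormedSpace ℝ X]
    [NormedAddCommGroup Y] [NormedSpace ℝ Y]
    (f : X →L[ℝ] Y) (e : X ≃L[ℝ] Y) (h : (e : X →L[ℝ] Y) = f) :
    ContinuousLinearMap.inverse f = (e.symm : Y →L[ℝ] X) := by
  rw [← h, inverse_equiv]

theorem horizontal_local
    {E M : Type*} [NormedAddCommGroup E] [NormedSpace ℝ E]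
    [NormedAddCommGroup M] [NormedSpace ℝ M]
    [FiniteDimensional ℝ E] [FiniteDimensional ℝ M]
    (π : E → M) (hπ : ContDiff ℝ (⊤ : ℕ∞) π)
    (hsubm : ∀ x : E, Function.Surjective (fderiv ℝ π x))
    (D : E → Submodule ℝ E) (hD : IsSmoothDistribution D)
    (hhor : ∀ x : E, IsCompl (LinearMap.ker (fderiv ℝ π x : E →ₗ[ℝ] M)) (D x))
    (U : Set M) (hU : IsOpen U)
    (s₁ s₂ : M → E)
    (hs₁ : ContDiffOn ℝ (⊤ : ℕ∞) s₁ U) (hs₂ : ContDiffOn ℝ (⊤ : ℕ∞) s₂ U)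
    (hsec₁ : ∀ m ∈ U, π (s₁ m) = m) (hsec₂ : ∀ m ∈ U, π (s₂ m) = m)
    (hhor₁ : ∀ m ∈ U, LinearMap.range (fderivWithin ℝ s₁ U m : M →ₗ[ℝ] E) = D (s₁ m))
    (hhor₂ : ∀ m ∈ U, LinearMap.range (fderivWithin ℝ s₂ U m : M →ₗ[ℝ] E) = D (s₂ m))
    (m₀ : M) (hm₀ : m₀ ∈ U) (heq : s₁ m₀ = s₂ m₀) :
    ∀ᶠ m in nhds m₀, s₁ m = s₂ m := by
  set y₀ := s₁ m₀ with hy₀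
  obtain ⟨k, θ, W, hWopen, hy₀W, hθsm, hθsurj, hθker⟩ := hD y₀
  set A : E → (E →L[ℝ] M × (Fin k → ℝ)) := fun y =>
    (ContinuousLinearMap.inl ℝ M (Fin k → ℝ)).comp (fderiv ℝ π y)
      + (ContinuousLinearMap.inr ℝ M (Fin k → ℝ)).comp (θ y) with hAdef
  have hAapp : ∀ y z, A y z = (fderiv ℝ π y z, θ y z) := by
    intro y z; simp [hAdef, Prod.ext_iff]
  have hAsm : ContDiffOn ℝ 1 A W :=
    (contDiffOn_const.clm_comp ((hπ.fderiv_right (m := 1) (WithTop.coe_le_coe.2 le_top)).contDiffOn.of_le le_rfl)).add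
      (contDiffOn_const.clm_comp (hθsm.of_le (by simp)))
  -- injectivity of A y for y ∈ W
  have hker : ∀ y ∈ W, LinearMap.ker (A y : E →ₗ[ℝ] M × (Fin k → ℝ)) = ⊥ := by
    intro y hy
    rw [LinearMap.ker_eq_bot']
    intro z hz
    rw [ContinuousLinearMap.coe_coe, hAapp, Prod.ext_iff] at hz
    have hz1 : z ∈ LinearMap.ker (fderiv ℝ π y : E →ₗ[ℝ] M) := hz.1
    have hz2 : z ∈ D y := by rw [← hθker y hy]; exact hz.2
    have hb := (hhor y).inf_eq_bot
    have : z ∈ (⊥ : Submodule ℝ E) := hb ▸ Submodule.mem_inf.2 ⟨hz1, hz2⟩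
    simpa using this
  -- surjectivity via finrank
  have hrange : ∀ y ∈ W, LinearMap.range (A y : E →ₗ[ℝ] M × (Fin k → ℝ)) = ⊤ := by
    intro y hy
    apply Submodule.eq_top_of_finrank_eq
    have h1 : Module.finrank ℝ (M × (Fin k → ℝ)) = Module.finrank ℝ M + k := by
      rw [Module.finrank_prod, Module.finrank_fin_fun]
    have h2 : Module.finrank ℝ M + Module.finrank ℝ (LinearMap.ker (fderiv ℝ π y : E →ₗ[ℝ] M))
        = Module.finrank ℝ E := by
      have h := LinearMap.finrank_range_add_finrank_ker (fderiv ℝ π y : E →ₗ[ℝ] M)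
      rw [show LinearMap.range ((fderiv ℝ π y : E →ₗ[ℝ] M)) = ⊤ from
        LinearMap.range_eq_top.2 (hsubm y), finrank_top] at h
      exact h
    have h3 : k + Module.finrank ℝ (D y) = Module.finrank ℝ E := by
      rw [← hθker y hy]
      have h := LinearMap.finrank_range_add_finrank_ker (θ y : E →ₗ[ℝ] (Fin k → ℝ))
      rw [show LinearMap.range ((θ y : E →ₗ[ℝ] (Fin k → ℝ))) = ⊤ from
        LinearMap.range_eq_top.2 (hθsurj y hy), finrank_top, Module.finrank_fin_fun] at h
      exact h
    have h4 : Module.finrank ℝ (LinearMap.ker (fderiv ℝ π y : E →ₗ[ℝ] M)) + Module.finrank ℝ (D y)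
        = Module.finrank ℝ E := Submodule.finrank_add_eq_of_isCompl (hhor y)
    have h5 : Module.finrank ℝ (LinearMap.range (A y : E →ₗ[ℝ] M × (Fin k → ℝ))) = Module.finrank ℝ E :=
      LinearMap.finrank_range_of_inj (LinearMap.ker_eq_bot.1 (hker y hy))
    rw [h5, h1]; omega
  -- the horizontal lift operator
  set L : E → (M →L[ℝ] E) := fun y =>
    (ContinuousLinearMap.inverse (A y)).comp (ContinuousLinearMap.inl ℝ M (Fin k → ℝ)) with hLdef
  have hAL : ∀ y, ∀ hy : y ∈ W, ∀ v : M, A y (L y v) = (v, 0) := by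
    intro y hy v
    have hcoe := ContinuousLinearEquiv.coe_ofBijective (A y) (hker y hy) (hrange y hy)
    have h2 : ContinuousLinearMap.inverse (A y)
        = ((ContinuousLinearEquiv.ofBijective (A y) (hker y hy) (hrange y hy)).symm :
            (M × (Fin k → ℝ)) →L[ℝ] E) :=
      inverse_eq_symm _ _ hcoe
    simp only [hLdef, h2, ContinuousLinearMap.comp_apply, inl_apply,
      ContinuousLinearEquiv.coe_coe]
    calc A y ((ContinuousLinearEquiv.ofBijective (A y) (hker y hy) (hrange y hy)).symm (v, 0))
        = (ContinuousLinearEquiv.ofBijective (A y) (hker y hy) (hrange y hy))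
            ((ContinuousLinearEquiv.ofBijective (A y) (hker y hy) (hrange y hy)).symm (v, 0)) := by
          rw [ContinuousLinearEquiv.ofBijective_apply_symm_apply]
          exact ((ContinuousLinearEquiv.ofBijective (A y) (hker y hy)
            (hrange y hy)).apply_symm_apply _).symm
      _ = (v, 0) := (ContinuousLinearEquiv.ofBijective (A y) (hker y hy)
            (hrange y hy)).apply_symm_apply _
  -- uniqueness of horizontal lifts
  have huniq : ∀ y, ∀ hy : y ∈ W, ∀ (w : E) (v : M),
      fderiv ℝ π y w = v → w ∈ D y → w = L y v := by
    intro y hy w v hw1 hw2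
    have hinj : Function.Injective (A y) := LinearMap.ker_eq_bot.mp (hker y hy)
    apply hinj
    rw [hAL y hy v, hAapp, hw1]
    congr 1
    have : w ∈ LinearMap.ker (θ y : E →ₗ[ℝ] (Fin k → ℝ)) := by rw [hθker y hy]; exact hw2
    simpa using this
  -- smoothness of L at y₀
  have hLc : ContDiffAt ℝ 1 L y₀ := by
    have hA_at : ContDiffAt ℝ 1 A y₀ := hAsm.contDiffAt (hWopen.mem_nhds hy₀W)
    have hinvc : ContDiffAt ℝ 1 (fun y => ContinuousLinearMap.inverse (A y)) y₀ := by
      have h1 : ContDiffAt ℝ 1 ContinuousLinearMap.inverse (A y₀) :=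
        ContinuousLinearEquiv.coe_ofBijective (A y₀) (hker y₀ hy₀W) (hrange y₀ hy₀W) ▸
          contDiffAt_map_inverse
            (ContinuousLinearEquiv.ofBijective (A y₀) (hker y₀ hy₀W) (hrange y₀ hy₀W))
      exact h1.comp y₀ hA_at
    exact hinvc.clm_comp contDiffAt_const
  -- Lipschitz bound for L near y₀
  obtain ⟨K, t, ht, hLip⟩ := hLc.exists_lipschitzOnWith
  obtain ⟨r, hr, hball⟩ := Metric.mem_nhds_iff.1 (Filter.inter_mem ht (hWopen.mem_nhds hy₀W))
  -- choose δ
  have hc₁ : ContinuousAt s₁ m₀ := (hs₁.contDiffAt (hU.mem_nhds hm₀)).continuousAt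
  have hc₂ : ContinuousAt s₂ m₀ := (hs₂.contDiffAt (hU.mem_nhds hm₀)).continuousAt
  have hnb : (s₁ ⁻¹' ball y₀ r) ∩ (s₂ ⁻¹' ball y₀ r) ∩ U ∈ nhds m₀ := by
    refine Filter.inter_mem (Filter.inter_mem ?_ ?_) (hU.mem_nhds hm₀)
    · exact hc₁ (ball_mem_nhds y₀ hr)
    · exact hc₂ (by rw [show s₂ m₀ = y₀ from heq.symm] at *; exact ball_mem_nhds y₀ hr)
  obtain ⟨δ, hδ, hδsub⟩ := Metric.mem_nhds_iff.1 hnb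
  rw [Metric.eventually_nhds_iff_ball]
  refine ⟨δ, hδ, fun m hm => ?_⟩
  -- set up the two curves
  set v : M := m - m₀ with hv
  set c : ℝ → M := fun t => m₀ + t • v with hc
  have hcball : ∀ t ∈ Icc (0:ℝ) 1, c t ∈ ball m₀ δ := by
    intro t ht'
    have : dist (c t) m₀ = ‖t • v‖ := by
      simp [hc, dist_eq_norm]
    rw [mem_ball, this]
    calc ‖t • v‖ = |t| * ‖v‖ := by rw [norm_smul, Real.norm_eq_abs]
      _ ≤ 1 * ‖v‖ := by
          apply mul_le_mul_of_nonneg_right _ (norm_nonneg v)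
          rw [abs_le]; constructor <;> linarith [ht'.1, ht'.2]
      _ = ‖v‖ := one_mul _
      _ < δ := by rw [hv, ← dist_eq_norm]; exact hm
  have hcderiv : ∀ t : ℝ, HasDerivAt c v t := by
    intro t
    have h1 : HasDerivAt (fun t : ℝ => t • v) ((1:ℝ) • v) t :=
      (hasDerivAt_id t).smul_const v
    rw [one_smul] at h1
    exact h1.const_add m₀
  -- key derivative computation for both sections
  have key : ∀ (s : M → E), ContDiffOn ℝ (⊤ : ℕ∞) s U → (∀ m' ∈ U, π (s m') = m') →
      (∀ m' ∈ U, LinearMap.range (fderivWithin ℝ s U m' : M →ₗ[ℝ] E) = D (s m')) →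
      (∀ t ∈ Icc (0:ℝ) 1, s (c t) ∈ ball y₀ r) →
      ∀ t ∈ Icc (0:ℝ) 1, HasDerivAt (fun t => s (c t)) (L (s (c t)) v) t := by
    intro s hs hsec hhors hsball t ht'
    have hpU : c t ∈ U := (hδsub (hcball t ht')).2
    have hdiff : DifferentiableAt ℝ s (c t) :=
      (hs.contDiffAt (hU.mem_nhds hpU)).differentiableAt (by simp)
    have hfw : fderivWithin ℝ s U (c t) = fderiv ℝ s (c t) := fderivWithin_of_isOpen hU hpU
    have hcomp : HasDerivAt (fun t => s (c t)) (fderiv ℝ s (c t) v) t :=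
      hdiff.hasFDerivAt.comp_hasDerivAt t (hcderiv t)
    have hsW : s (c t) ∈ W := (hball (hsball t ht')).2
    have hD1 : fderiv ℝ s (c t) v ∈ D (s (c t)) := by
      rw [← hhors (c t) hpU, ← hfw]
      exact ⟨v, by rw [hfw]; rfl⟩
    have hπs : fderiv ℝ π (s (c t)) (fderiv ℝ s (c t) v) = v := by
      have hπd : DifferentiableAt ℝ π (s (c t)) :=
        (hπ.differentiable (by simp)).differentiableAt
      have hcomp2 : fderiv ℝ (π ∘ s) (c t) =
          (fderiv ℝ π (s (c t))).comp (fderiv ℝ s (c t)) := fderiv_comp (c t) hπd hdiff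
      have hid : fderiv ℝ (π ∘ s) (c t) = ContinuousLinearMap.id ℝ M := by
        have hev : (π ∘ s) =ᶠ[nhds (c t)] id :=
          Filter.eventually_of_mem (hU.mem_nhds hpU) (fun m' hm' => hsec m' hm')
        rw [hev.fderiv_eq, fderiv_id]
      have := congrArg (fun (f : M →L[ℝ] M) => f v) (hid ▸ hcomp2)
      simpa using this.symm
    have := huniq (s (c t)) hsW (fderiv ℝ s (c t) v) v hπs hD1
    exact this ▸ hcomp
  have hs₁ball : ∀ t ∈ Icc (0:ℝ) 1, s₁ (c t) ∈ ball y₀ r := by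
    intro t ht'
    exact ((hδsub (hcball t ht')).1).1
  have hs₂ball : ∀ t ∈ Icc (0:ℝ) 1, s₂ (c t) ∈ ball y₀ r := by
    intro t ht'
    exact ((hδsub (hcball t ht')).1).2
  have hd₁ := key s₁ hs₁ hsec₁ hhor₁ hs₁ball
  have hd₂ := key s₂ hs₂ hsec₂ hhor₂ hs₂ball
  -- Lipschitz for the vector field
  have hFlip : LipschitzOnWith (K * ‖v‖₊) (fun y => L y v) (ball y₀ r) := by
    rw [lipschitzOnWith_iff_dist_le_mul]
    intro a ha b hb
    have hLab := lipschitzOnWith_iff_dist_le_mul.1 hLip a (hball ha).1 b (hball hb).1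
    calc dist (L a v) (L b v) = ‖(L a - L b) v‖ := by
          rw [dist_eq_norm, ContinuousLinearMap.sub_apply]
      _ ≤ ‖L a - L b‖ * ‖v‖ := (L a - L b).le_opNorm v
      _ = dist (L a) (L b) * ‖v‖ := by rw [dist_eq_norm]
      _ ≤ (K * dist a b) * ‖v‖ :=
          mul_le_mul_of_nonneg_right hLab (norm_nonneg v)
      _ = ↑(K * ‖v‖₊) * dist a b := by push_cast; ring
  -- apply ODE uniqueness
  have heqon : Set.EqOn (fun t => s₁ (c t)) (fun t => s₂ (c t)) (Icc 0 1) := by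
    apply ODE_solution_unique_of_mem_Icc_right
      (v := fun _ y => L y v) (s := fun _ => ball y₀ r) (K := K * ‖v‖₊)
    · intro _ _; exact hFlip
    · intro t ht'; exact (hd₁ t ht').continuousAt.continuousWithinAt
    · intro t ht'; exact (hd₁ t (Ico_subset_Icc_self ht')).hasDerivWithinAt
    · intro t ht'; exact hs₁ball t (Ico_subset_Icc_self ht')
    · intro t ht'; exact (hd₂ t ht').continuousAt.continuousWithinAt
    · intro t ht'; exact (hd₂ t (Ico_subset_Icc_self ht')).hasDerivWithinAt
    · intro t ht'; exact hs₂ball t (Ico_subset_Icc_self ht')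
    · show s₁ (c 0) = s₂ (c 0)
      have : c 0 = m₀ := by simp [hc]
      rw [this]; exact heq
  have h1 := heqon (right_mem_Icc.2 zero_le_one)
  have hc1 : c 1 = m := by simp [hc, hv]
  simpa [hc1] using h1
theorem horizontal_sections_unique
    {E M : Type*} [NormedAddCommGroup E] [NormedSpace ℝ E]
    [NormedAddCommGroup M] [NormedSpace ℝ M]
    [FiniteDimensional ℝ E] [FiniteDimensional ℝ M]
    (π : E → M) (hπ : ContDiff ℝ (⊤ : ℕ∞) π)
    (hsubm : ∀ x : E, Function.Surjective (fderiv ℝ π x))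
    (D : E → Submodule ℝ E) (hD : IsSmoothDistribution D)
    -- `D` is horizontal with respect to `π`: `T_x E = ker dπ_x ⊕ D_x`.
    (hhor : ∀ x : E, IsCompl (LinearMap.ker (fderiv ℝ π x : E →ₗ[ℝ] M)) (D x))
    (U : Set M) (hU : IsOpen U) (hUconn : IsConnected U)
    (s₁ s₂ : M → E)
    (hs₁ : ContDiffOn ℝ (⊤ : ℕ∞) s₁ U) (hs₂ : ContDiffOn ℝ (⊤ : ℕ∞) s₂ U)
    (hsec₁ : ∀ m ∈ U, π (s₁ m) = m) (hsec₂ : ∀ m ∈ U, π (s₂ m) = m)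
    -- horizontality of the sections: the range of `d s(m)` is `D (s m)`.
    (hhor₁ : ∀ m ∈ U, LinearMap.range (fderivWithin ℝ s₁ U m : M →ₗ[ℝ] E) = D (s₁ m))
    (hhor₂ : ∀ m ∈ U, LinearMap.range (fderivWithin ℝ s₂ U m : M →ₗ[ℝ] E) = D (s₂ m))
    (x : M) (hx : x ∈ U) (hxeq : s₁ x = s₂ x) :
    Set.EqOn s₁ s₂ U := by
  intro m hm
  by_contra hne
  set S : Set M := {m' | m' ∈ U ∧ s₁ m' = s₂ m'} with hS
  set T : Set M := {m' | m' ∈ U ∧ s₁ m' ≠ s₂ m'} with hT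
  have hSopen : IsOpen S := by
    rw [isOpen_iff_mem_nhds]
    rintro m₁ ⟨hm₁U, hm₁eq⟩
    have h1 := horizontal_local π hπ hsubm D hD hhor U hU s₁ s₂ hs₁ hs₂ hsec₁ hsec₂
      hhor₁ hhor₂ m₁ hm₁U hm₁eq
    filter_upwards [h1, hU.mem_nhds hm₁U] with m' h1' h2'
    exact ⟨h2', h1'⟩
  have hTopen : IsOpen T := by
    rw [isOpen_iff_mem_nhds]
    rintro m₁ ⟨hm₁U, hm₁ne⟩
    have hc : ContinuousAt (fun m' => s₁ m' - s₂ m') m₁ :=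
      ((hs₁.contDiffAt (hU.mem_nhds hm₁U)).continuousAt).sub
        ((hs₂.contDiffAt (hU.mem_nhds hm₁U)).continuousAt)
    have hne0 : s₁ m₁ - s₂ m₁ ≠ 0 := sub_ne_zero.2 hm₁ne
    filter_upwards [hc.eventually_ne hne0, hU.mem_nhds hm₁U] with m' h1' h2'
    exact ⟨h2', sub_ne_zero.1 h1'⟩
  have hcover : U ⊆ S ∪ T := by
    intro m' hm'
    by_cases h : s₁ m' = s₂ m'
    · exact Or.inl ⟨hm', h⟩
    · exact Or.inr ⟨hm', h⟩
  obtain ⟨m₂, hm₂U, hS2, hT2⟩ := hUconn.isPreconnected S T hSopen hTopen hcover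
    ⟨x, hx, hx, hxeq⟩ ⟨m, hm, hm, hne⟩
  exact hT2.2 hS2.2
end

section
/- Local single-leaf Frobenius theorem: Let π : E → M be a smooth submersion, D a smooth horizontal distribution on E, ψ : Z ⊂ ℝ × Λ → M a Λ-parametric family of curves on M with a local right inverse α : V ⊂ M → Z, and ψ̃ : Z → E a smooth map such that t ↦ ψ̃(t,λ) is a D-horizontal lifting of t ↦ ψ(t,λ) for each λ ∈ Λ. Assume (a) the Levi form of D vanishes on the range of ψ̃, and (b) ∂_λψ̃(0,λ) takes values in D for all λ ∈ Λ. Then s = ψ̃ ∘ α : V → E is a local horizontal section of π. -/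
open Set Function Module


/-!
STATEMENT 4 (local single-leaf Frobenius theorem).

Chart picture: `E`, `M` and the parameter manifold `Λ` are real normed spaces.
`π : E → M` is a smooth submersion and `D` is a smooth horizontal distribution on `E`
(`T_x E = ker dπ_x ⊕ D_x`).  `ψ : Z ⊆ ℝ × Λ → M` is a `Λ`-parametric family of curves
(`Z` open, each slice `I_λ = {t | (t,λ) ∈ Z}` an interval containing `0`) with a local
right inverse `α : V ⊆ M → Z` (`V` open, `ψ (α m) = m`).  `ψ̃ : Z → E` is smooth, with
`t ↦ ψ̃(t,λ)` a `D`-horizontal lifting of `t ↦ ψ(t,λ)`.  Assuming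
(a) the Levi form of `D` vanishes on the range of `ψ̃`, and
(b) `∂_λ ψ̃(0,λ)` takes values in `D`,
the map `s = ψ̃ ∘ α : V → E` is a local horizontal section of `π`.
-/

/-- The Lie bracket of vector fields on a normed space (chart picture). -/
noncomputable def lieBracketVF {E : Type*} [NormedAddCommGroup E] [NormedSpace ℝ E]
    (X Y : E → E) (x : E) : E :=
  fderiv ℝ Y x (X x) - fderiv ℝ X x (Y x)

/-- The Levi form of `D` vanishes at the point `z`. -/
def LeviFormVanishesAt {E : Type*} [NormedAddCommGroup E] [NormedSpace ℝ E]
    (D : E → Submodule ℝ E) (z : E) : Prop :=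
  ∀ X Y : E → E, ContDiff ℝ (⊤ : ℕ∞) X → ContDiff ℝ (⊤ : ℕ∞) Y →
    (∀ y, X y ∈ D y) → (∀ y, Y y ∈ D y) → lieBracketVF X Y z ∈ D z

lemma exists_clm_rightInverse {E F : Type*} [NormedAddCommGroup E] [NormedSpace ℝ E]
    [NormedAddCommGroup F] [NormedSpace ℝ F] [FiniteDimensional ℝ E] [FiniteDimensional ℝ F]
    (f : E →L[ℝ] F) (hf : Function.Surjective f) :
    ∃ σ : F →L[ℝ] E, ∀ v, f (σ v) = v := by
  obtain ⟨g, hg⟩ := (f : E →ₗ[ℝ] F).exists_rightInverse_of_surjective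
    (LinearMap.range_eq_top.2 hf)
  exact ⟨LinearMap.toContinuousLinearMap g, fun v => LinearMap.ext_iff.1 hg v⟩

lemma levi_antisym {E : Type*} [NormedAddCommGroup E] [NormedSpace ℝ E] [FiniteDimensional ℝ E]
    (D : E → Submodule ℝ E) {k : ℕ} (θ : E → (E →L[ℝ] (Fin k → ℝ))) {U : Set E}
    (hU : IsOpen U) (hθ : ContDiffOn ℝ (⊤ : ℕ∞) θ U)
    (hker : ∀ y ∈ U, LinearMap.ker (θ y : E →ₗ[ℝ] (Fin k → ℝ)) = D y)
    (Q : E → E →L[ℝ] E) (hQ : ContDiff ℝ (⊤ : ℕ∞) Q) (hQD : ∀ y v, Q y v ∈ D y)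
    (hQid : ∀ y, ∀ v ∈ D y, Q y v = v)
    {y : E} (hy : y ∈ U) (hLevi : LeviFormVanishesAt D y)
    {X Z : E} (hX : X ∈ D y) (hZ : Z ∈ D y) :
    fderiv ℝ θ y X Z = fderiv ℝ θ y Z X := by
  have hθdiff : HasFDerivAt θ (fderiv ℝ θ y) y :=
    ((hθ.differentiableOn (by simp)).differentiableAt (hU.mem_nhds hy)).hasFDerivAt
  -- the global analytic vector fields
  set FX : E → E := fun y' => Q y' X with hFX
  set FZ : E → E := fun y' => Q y' Z with hFZ
  have hFXc : ContDiff ℝ (⊤ : ℕ∞) FX := hQ.clm_apply contDiff_const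
  have hFZc : ContDiff ℝ (⊤ : ℕ∞) FZ := hQ.clm_apply contDiff_const
  have hFXy : FX y = X := hQid y X hX
  have hFZy : FZ y = Z := hQid y Z hZ
  -- the key differentiation identity
  have key : ∀ (F : E → E), ContDiff ℝ (⊤ : ℕ∞) F → (∀ y', F y' ∈ D y') → ∀ W : E,
      θ y (fderiv ℝ F y W) = - fderiv ℝ θ y W (F y) := by
    intro F hFc hFD W
    have hFdiff : HasFDerivAt F (fderiv ℝ F y) y :=
      ((hFc.differentiable (by simp)) y).hasFDerivAt
    have hzero : (fun y' => θ y' (F y')) =ᶠ[nhds y] (fun _ => (0 : Fin k → ℝ)) := by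
      filter_upwards [hU.mem_nhds hy] with y' hy'
      have : F y' ∈ LinearMap.ker (θ y' : E →ₗ[ℝ] (Fin k → ℝ)) := (hker y' hy').symm ▸ hFD y'
      exact this
    have hhas : HasFDerivAt (fun y' => θ y' (F y'))
        ((θ y).comp (fderiv ℝ F y) + (fderiv ℝ θ y).flip (F y)) y :=
      hθdiff.clm_apply hFdiff
    have : ((θ y).comp (fderiv ℝ F y) + (fderiv ℝ θ y).flip (F y)) = 0 := by
      rw [← hhas.fderiv, hzero.fderiv_eq]
      exact fderiv_const_apply _
    have := ContinuousLinearMap.ext_iff.1 this W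
    simpa [eq_neg_iff_add_eq_zero, add_comm] using this
  have hXkey := key FX hFXc (fun y' => hQD y' X) Z
  have hZkey := key FZ hFZc (fun y' => hQD y' Z) X
  -- the Levi form
  have hbr : lieBracketVF FX FZ y ∈ D y :=
    hLevi FX FZ hFXc hFZc (fun y' => hQD y' X) (fun y' => hQD y' Z)
  have hbr0 : θ y (lieBracketVF FX FZ y) = 0 := by
    have : lieBracketVF FX FZ y ∈ LinearMap.ker (θ y : E →ₗ[ℝ] (Fin k → ℝ)) := (hker y hy).symm ▸ hbr
    exact this
  rw [lieBracketVF, hFXy, hFZy, map_sub, hZkey, hXkey, hFZy, hFXy] at hbr0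
  -- hbr0 : -(fθ X) Z - -(fθ Z) X = 0
  have h : ((fderiv ℝ θ y) Z) X - ((fderiv ℝ θ y) X) Z = 0 := by
    rw [← neg_sub_neg]; exact hbr0
  exact (sub_eq_zero.mp h).symm

lemma exists_proj {E M : Type*} [NormedAddCommGroup E] [NormedSpace ℝ E]
    [NormedAddCommGroup M] [NormedSpace ℝ M] [FiniteDimensional ℝ E] [FiniteDimensional ℝ M]
    (π : E → M) (hπ : ContDiff ℝ (⊤ : ℕ∞) π)
    (hsubm : ∀ x : E, Function.Surjective (fderiv ℝ π x))
    (D : E → Submodule ℝ E) (hD : IsSmoothDistribution D)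
    (hhor : ∀ x : E, IsCompl (LinearMap.ker (fderiv ℝ π x : E →ₗ[ℝ] M)) (D x)) :
    ∃ Q : E → E →L[ℝ] E, ContDiff ℝ (⊤ : ℕ∞) Q ∧ (∀ y v, Q y v ∈ D y) ∧
      (∀ y, ∀ v ∈ D y, Q y v = v) := by
  classical
  -- the pointwise projection onto `D y` along `ker dπ_y`
  set Qlin : ∀ y : E, E →ₗ[ℝ] E := fun y =>
    (D y).subtype ∘ₗ ((D y).linearProjOfIsCompl _ (hhor y).symm) with hQlin
  set Q : E → E →L[ℝ] E := fun y => LinearMap.toContinuousLinearMap (Qlin y) with hQdef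
  have hQapp : ∀ y v, Q y v = Qlin y v := fun y v => rfl
  have hQD : ∀ y v, Q y v ∈ D y := fun y v => ((D y).linearProjOfIsCompl _ (hhor y).symm v).2
  have hQid : ∀ y, ∀ v ∈ D y, Q y v = v := by
    intro y v hv
    rw [hQapp]
    simp only [hQlin, LinearMap.comp_apply, Submodule.subtype_apply]
    exact congrArg Subtype.val (Submodule.projectionOnto_apply_left (hhor y).symm ⟨v, hv⟩)
  have hQker : ∀ y v, v - Q y v ∈ LinearMap.ker (fderiv ℝ π y : E →ₗ[ℝ] M) := by
    intro y v
    have h := Submodule.projection_add_projection_eq_self (hhor y).symm v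
    have : v - Q y v = ((LinearMap.ker (fderiv ℝ π y : E →ₗ[ℝ] M)).linearProjOfIsCompl _ (hhor y) v : E) := by
      rw [hQapp]
      simp only [hQlin, LinearMap.comp_apply, Submodule.subtype_apply]
      rw [sub_eq_iff_eq_add, add_comm]
      exact h.symm
    rw [this]; exact ((LinearMap.ker (fderiv ℝ π y : E →ₗ[ℝ] M)).linearProjOfIsCompl _ (hhor y) v).2
  refine ⟨Q, ?_, hQD, hQid⟩
  -- smoothness of `Q`
  rw [contDiff_iff_contDiffAt]
  intro y₀
  obtain ⟨k, θ, U, hUo, hy₀U, hθ, hθsurj, hθker⟩ := hD y₀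
  have hdπ : ContDiff ℝ (⊤ : ℕ∞) (fderiv ℝ π) := hπ.fderiv_right (by simp)
  set Φ : E → (E →L[ℝ] M × (Fin k → ℝ)) := fun y => (fderiv ℝ π y).prod (θ y) with hΦdef
  -- dimension count
  have hdimD : ∀ y : E, finrank ℝ (D y) = finrank ℝ M := by
    intro y
    have h1 := Submodule.finrank_add_eq_of_isCompl (hhor y)
    have h2 := LinearMap.finrank_range_add_finrank_ker (fderiv ℝ π y : E →ₗ[ℝ] M)
    have h3 : LinearMap.range (fderiv ℝ π y : E →ₗ[ℝ] M) = ⊤ :=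
      LinearMap.range_eq_top.2 (by simpa using hsubm y)
    have h4 : LinearMap.ker ((fderiv ℝ π y : E →ₗ[ℝ] M)) = LinearMap.ker (fderiv ℝ π y : E →ₗ[ℝ] M) := rfl
    rw [h3, finrank_top, h4] at h2
    omega
  have hk : finrank ℝ M + k = finrank ℝ E := by
    have h2 := LinearMap.finrank_range_add_finrank_ker (θ y₀ : E →ₗ[ℝ] (Fin k → ℝ))
    have h3 : LinearMap.range (θ y₀ : E →ₗ[ℝ] (Fin k → ℝ)) = ⊤ :=
      LinearMap.range_eq_top.2 (by simpa using hθsurj y₀ hy₀U)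
    have h5 : LinearMap.ker ((θ y₀ : E →ₗ[ℝ] (Fin k → ℝ))) = LinearMap.ker (θ y₀ : E →ₗ[ℝ] (Fin k → ℝ)) := rfl
    rw [h3, finrank_top, Module.finrank_fin_fun, h5, hθker y₀ hy₀U] at h2
    have := hdimD y₀
    omega
  -- injectivity of Φ y₀
  have hinj : Function.Injective (Φ y₀) := by
    intro v w hvw
    have h0 : Φ y₀ (v - w) = 0 := by rw [map_sub, hvw, sub_self]
    rw [hΦdef] at h0
    simp only [ContinuousLinearMap.prod_apply, Prod.mk_eq_zero] at h0
    have hDm : v - w ∈ D y₀ := by rw [← hθker y₀ hy₀U]; exact h0.2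
    have hmem : v - w ∈ (LinearMap.ker (fderiv ℝ π y₀ : E →ₗ[ℝ] M)) ⊓ (D y₀) := ⟨h0.1, hDm⟩
    rw [(hhor y₀).inf_eq_bot, Submodule.mem_bot] at hmem
    exact sub_eq_zero.mp hmem
  have hsurjΦ : Function.Surjective (Φ y₀) := by
    have hfr : finrank ℝ E = finrank ℝ (M × (Fin k → ℝ)) := by
      rw [Module.finrank_prod, Module.finrank_fin_fun]
      omega
    exact (LinearMap.injective_iff_surjective_of_finrank_eq_finrank hfr).mp hinj
  set e : E ≃L[ℝ] M × (Fin k → ℝ) :=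
    LinearEquiv.toContinuousLinearEquiv
      (LinearEquiv.ofBijective ((Φ y₀ : E →ₗ[ℝ] M × (Fin k → ℝ))) ⟨hinj, hsurjΦ⟩) with hedef
  have he : ∀ v, e v = Φ y₀ v := fun v => rfl
  set Ψ : E → ((M × (Fin k → ℝ)) →L[ℝ] (M × (Fin k → ℝ))) := fun y =>
    (Φ y).comp (e.symm : (M × (Fin k → ℝ)) →L[ℝ] E) with hΨdef
  have hΨapp : ∀ y w, Ψ y w = Φ y (e.symm w) := fun y w => rfl
  have hΨ1 : Ψ y₀ = 1 := by
    refine ContinuousLinearMap.ext fun w => ?_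
    rw [hΨapp, ← he, e.apply_symm_apply]
    simp
  -- smoothness of Φ on U
  have hΦeq : ∀ y, Φ y = (ContinuousLinearMap.inl ℝ M (Fin k → ℝ)).comp (fderiv ℝ π y)
      + (ContinuousLinearMap.inr ℝ M (Fin k → ℝ)).comp (θ y) := by
    intro y
    ext v <;> simp [hΦdef]
  have hΦU : ContDiffOn ℝ (⊤ : ℕ∞) Φ U := by
    refine ContDiffOn.congr ?_ (fun y _ => hΦeq y)
    exact (contDiffOn_const.clm_comp (hdπ.contDiffOn)).add (contDiffOn_const.clm_comp hθ)
  have hΨat : ContDiffAt ℝ (⊤ : ℕ∞) Ψ y₀ :=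
    (hΦU.contDiffAt (hUo.mem_nhds hy₀U)).clm_comp contDiffAt_const
  have hunit : ∀ᶠ y in nhds y₀, IsUnit (Ψ y) ∧ y ∈ U := by
    filter_upwards [hΨat.continuousAt.preimage_mem_nhds
      (Units.isOpen.mem_nhds (by rw [hΨ1]; exact isUnit_one)), hUo.mem_nhds hy₀U] with y h1 h2
    exact ⟨h1, h2⟩
  set Qalt : E → E →L[ℝ] E := fun y =>
    ((e.symm : (M × (Fin k → ℝ)) →L[ℝ] E)).comp ((Ring.inverse (Ψ y)).comp
      ((ContinuousLinearMap.inl ℝ M (Fin k → ℝ)).comp (fderiv ℝ π y))) with hQaltdef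
  have hQalt_at : ContDiffAt ℝ (⊤ : ℕ∞) Qalt y₀ := by
    have hinv : ContDiffAt ℝ (⊤ : ℕ∞) (fun y => Ring.inverse (Ψ y)) y₀ := by
      have h1 : ContDiffAt ℝ (⊤ : ℕ∞) Ring.inverse (Ψ y₀) := by
        rw [hΨ1]
        simpa using contDiffAt_ringInverse (𝕜 := ℝ)
          (1 : ((M × (Fin k → ℝ)) →L[ℝ] (M × (Fin k → ℝ)))ˣ)
      exact h1.comp y₀ hΨat
    exact contDiffAt_const.clm_comp
      (hinv.clm_comp (contDiffAt_const.clm_comp hdπ.contDiffAt))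
  have hQeq : Q =ᶠ[nhds y₀] Qalt := by
    filter_upwards [hunit] with y hy
    obtain ⟨hyu, hyU⟩ := hy
    ext v
    have hQaltv : Qalt y v
        = e.symm (Ring.inverse (Ψ y) (fderiv ℝ π y v, 0)) := by
      simp [hQaltdef]
    set P : E := e.symm (Ring.inverse (Ψ y) (fderiv ℝ π y v, 0)) with hPdef
    have hΦP : Φ y P = (fderiv ℝ π y v, 0) := by
      have h1 : Φ y P = Ψ y (Ring.inverse (Ψ y) (fderiv ℝ π y v, 0)) := rfl
      rw [h1, ← ContinuousLinearMap.mul_apply, Ring.mul_inverse_cancel _ hyu,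
        ContinuousLinearMap.one_apply]
    have hP1 : fderiv ℝ π y P = fderiv ℝ π y v := by
      have := congrArg Prod.fst hΦP
      simpa [hΦdef] using this
    have hP2 : θ y P = 0 := by
      have := congrArg Prod.snd hΦP
      simpa [hΦdef] using this
    have hPD : P ∈ D y := by rw [← hθker y hyU]; exact hP2
    have hPker : v - P ∈ LinearMap.ker (fderiv ℝ π y : E →ₗ[ℝ] M) := by
      simp [LinearMap.mem_ker, map_sub, hP1]
    have hdiff : Q y v - P ∈ (LinearMap.ker (fderiv ℝ π y : E →ₗ[ℝ] M)) ⊓ (D y) := by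
      constructor
      · have h3 : Q y v - P = (v - P) - (v - Q y v) := by abel
        rw [h3]
        exact Submodule.sub_mem _ hPker (hQker y v)
      · exact Submodule.sub_mem _ (hQD y v) hPD
    rw [(hhor y).inf_eq_bot, Submodule.mem_bot] at hdiff
    rw [hQaltv]
    exact sub_eq_zero.mp hdiff
  exact hQalt_at.congr_of_eventuallyEq hQeq

lemma linear_ODE_zero {F : Type*} [NormedAddCommGroup F] [NormedSpace ℝ F]
    {A : ℝ → (F →L[ℝ] F)} {w : ℝ → F} {a b t₀ : ℝ} (ht₀ : t₀ ∈ Set.Ioo a b)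
    {K : ℝ} (hK : ∀ t ∈ Set.Ioo a b, ‖A t‖ ≤ K)
    (hw : ∀ t ∈ Set.Ioo a b, HasDerivAt w (A t (w t)) t)
    (h0 : w t₀ = 0) : ∀ t ∈ Set.Ioo a b, w t = 0 := by
  classical
  set v : ℝ → F → F := fun t y => if t ∈ Set.Ioo a b then A t y else 0 with hv
  have hK0 : (0:ℝ) ≤ K := le_trans (norm_nonneg _) (hK t₀ ht₀)
  have hlip : ∀ t, LipschitzWith K.toNNReal (v t) := by
    intro t
    by_cases ht : t ∈ Set.Ioo a b
    · have h1 : LipschitzWith ‖A t‖₊ (A t) := (A t).lipschitz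
      have h2 : v t = A t := by
        funext y
        show (if t ∈ Ioo a b then (A t) y else 0) = A t y
        rw [if_pos ht]
      rw [h2]
      refine h1.weaken ?_
      rw [← NNReal.coe_le_coe]
      simpa [Real.coe_toNNReal _ hK0] using hK t ht
    · have h2 : v t = fun _ => (0:F) := by
        funext y
        show (if t ∈ Ioo a b then (A t) y else 0) = 0
        rw [if_neg ht]
      rw [h2]
      exact (LipschitzWith.const 0).weaken zero_le
  have := ODE_solution_unique_of_mem_Ioo
    (v := v) (s := fun _ => Set.univ)
    (fun t _ => (hlip t).lipschitzOnWith)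
    (t₀ := t₀) (f := w) (g := fun _ => 0) ht₀
    (fun t ht => ⟨by
      have he : v t (w t) = A t (w t) := by
        show (if t ∈ Ioo a b then (A t) (w t) else 0) = A t (w t)
        rw [if_pos ht]
      rw [he]; exact hw t ht, trivial⟩)
    (fun t ht => ⟨by
      have he : v t (0:F) = 0 := by
        show (if t ∈ Ioo a b then (A t) (0:F) else 0) = 0
        rw [if_pos ht]; simp
      rw [he]; exact hasDerivAt_const t (0:F), trivial⟩)
    (by simpa using h0)
  intro t ht
  exact this ht

set_option maxHeartbeats 1000000 in
lemma horizontal_propagation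
    {E Λ : Type*} [NormedAddCommGroup E] [NormedSpace ℝ E]
    [NormedAddCommGroup Λ] [NormedSpace ℝ Λ]
    [FiniteDimensional ℝ E] [FiniteDimensional ℝ Λ]
    (D : E → Submodule ℝ E) (hD : IsSmoothDistribution D)
    (Q : E → E →L[ℝ] E) (hQ : ContDiff ℝ (⊤ : ℕ∞) Q) (hQD : ∀ y v, Q y v ∈ D y)
    (hQid : ∀ y, ∀ v ∈ D y, Q y v = v)
    (Z : Set (ℝ × Λ)) (hZ : IsOpen Z)
    (hslice : ∀ lam : Λ, (0, lam) ∈ Z ∧ {t : ℝ | (t, lam) ∈ Z}.OrdConnected)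
    (ψt : ℝ × Λ → E) (hψt : ContDiffOn ℝ (⊤ : ℕ∞) ψt Z)
    (hhoriz : ∀ p ∈ Z, fderiv ℝ ψt p (1, 0) ∈ D (ψt p))
    (hLevi : ∀ p ∈ Z, LeviFormVanishesAt D (ψt p))
    (hb : ∀ lam u, fderiv ℝ ψt (0, lam) (0, u) ∈ D (ψt (0, lam))) :
    ∀ p ∈ Z, ∀ u : Λ, fderiv ℝ ψt p (0, u) ∈ D (ψt p) := by
  rintro ⟨t₀, lam₀⟩ hp u
  set c : ℝ → ℝ × Λ := fun t => (t, lam₀) with hcdef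
  have hccont : Continuous c := continuous_id.prodMk continuous_const
  set I : Set ℝ := {t | (t, lam₀) ∈ Z} with hIdef
  have hIo : IsOpen I := hZ.preimage hccont
  have hIpc : IsPreconnected I := (hslice lam₀).2.isPreconnected
  have h0I : (0:ℝ) ∈ I := (hslice lam₀).1
  have ht₀I : t₀ ∈ I := hp
  set x : ℝ → E := fun t => ψt (c t) with hxdef
  set Φ : ℝ × Λ → (ℝ × Λ) →L[ℝ] E := fun q => fderiv ℝ ψt q with hΦdef
  set g : ℝ → E := fun t => Φ (c t) (0, u) with hgdef
  have hΦC1 : ContDiffOn ℝ 1 Φ Z := hψt.fderiv_of_isOpen hZ (by exact WithTop.coe_le_coe.mpr le_top)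
  have hψdiffat : ∀ q ∈ Z, HasFDerivAt ψt (Φ q) q := fun q hq =>
    ((hψt.differentiableOn (by simp)).differentiableAt (hZ.mem_nhds hq)).hasFDerivAt
  have hcI : ∀ t ∈ I, c t ∈ Z := fun t ht => ht
  have hxcont : ContinuousOn x I := hψt.continuousOn.comp hccont.continuousOn hcI
  have hgcont : ContinuousOn g I :=
    (hΦC1.continuousOn.comp hccont.continuousOn hcI).clm_apply continuousOn_const
  have hXD : ∀ t ∈ I, Φ (c t) (1, 0) ∈ D (x t) := fun t ht => hhoriz (c t) ht
  -- the local chart selection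
  have loc : ∀ t₁ ∈ I, ∃ (k : ℕ) (θ : E → (E →L[ℝ] (Fin k → ℝ))) (U : Set E) (ε : ℝ),
      IsOpen U ∧ 0 < ε ∧ ContDiffOn ℝ (⊤ : ℕ∞) θ U ∧
      (∀ y ∈ U, LinearMap.ker (θ y : E →ₗ[ℝ] (Fin k → ℝ)) = D y) ∧ (∀ y ∈ U, Function.Surjective (θ y)) ∧
      Set.Ioo (t₁-ε) (t₁+ε) ⊆ I ∧ (∀ t ∈ Set.Ioo (t₁-ε) (t₁+ε), x t ∈ U) := by
    intro t₁ ht₁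
    obtain ⟨k, θ, U, hUo, hxU, hθ, hθsurj, hθker⟩ := hD (x t₁)
    have hxat : ContinuousAt x t₁ := hxcont.continuousAt (hIo.mem_nhds ht₁)
    have hmem : (x ⁻¹' U) ∩ I ∈ nhds t₁ :=
      Filter.inter_mem (hxat.preimage_mem_nhds (hUo.mem_nhds hxU)) (hIo.mem_nhds ht₁)
    obtain ⟨ε, hε, hball⟩ := Metric.mem_nhds_iff.1 hmem
    refine ⟨k, θ, U, ε, hUo, hε, hθ, hθker, hθsurj, ?_, ?_⟩
    · intro t ht
      exact (hball (by rw [Real.ball_eq_Ioo]; exact ht)).2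
    · intro t ht
      exact (hball (by rw [Real.ball_eq_Ioo]; exact ht)).1
  haveI : PreconnectedSpace ↥I := Subtype.preconnectedSpace hIpc
  set S : Set ↥I := {t : ↥I | g ↑t ∈ D (x ↑t)} with hSdef
  have hSuniv : S = Set.univ := by
    refine IsClopen.eq_univ ⟨?_, ?_⟩ ⟨⟨0, h0I⟩, hb lam₀ u⟩
    · -- closed: the complement is open
      rw [← isOpen_compl_iff, isOpen_iff_mem_nhds]
      rintro ⟨t₁, ht₁I⟩ hmem
      obtain ⟨k, θ, U, ε, hUo, hε, hθ, hθker, hθsurj, hJI, hJU⟩ := loc t₁ ht₁I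
      set J := Set.Ioo (t₁ - ε) (t₁ + ε) with hJdef
      have ht₁J : t₁ ∈ J := by constructor <;> simp <;> linarith
      have hwcont : ContinuousOn (fun t => θ (x t) (g t)) J :=
        ((hθ.continuousOn.comp (hxcont.mono hJI) hJU).clm_apply (hgcont.mono hJI))
      have hw1 : θ (x t₁) (g t₁) ≠ 0 := by
        intro h
        have hmem2 : g t₁ ∈ D (x t₁) := by
          rw [← hθker (x t₁) (hJU t₁ ht₁J)]; exact h
        exact hmem hmem2
      set W := J ∩ (fun t => θ (x t) (g t)) ⁻¹' ({0}ᶜ) with hWdef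
      have hWo : IsOpen W := hwcont.isOpen_inter_preimage isOpen_Ioo isOpen_compl_singleton
      rw [nhds_subtype_eq_comap]
      refine Filter.mem_comap.2 ⟨W, hWo.mem_nhds ⟨ht₁J, hw1⟩, ?_⟩
      rintro ⟨t, htI⟩ htW hgt
      have hgt2 : g t ∈ D (x t) := hgt
      rw [← hθker (x t) (hJU t htW.1)] at hgt2
      exact htW.2 hgt2
    · -- open
      rw [isOpen_iff_mem_nhds]
      rintro ⟨t₁, ht₁I⟩ hS₁
      have hgD1 : g t₁ ∈ D (x t₁) := hS₁
      obtain ⟨k, θ, U, ε, hUo, hε, hθ, hθker, hθsurj, hJI, hJU⟩ := loc t₁ ht₁I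
      set J := Set.Ioo (t₁ - ε) (t₁ + ε) with hJdef
      have ht₁J : t₁ ∈ J := by constructor <;> simp <;> linarith
      obtain ⟨σ, hσ⟩ := exists_clm_rightInverse (θ (x t₁)) (hθsurj _ (hJU t₁ ht₁J))
      set G : E → ((Fin k → ℝ) →L[ℝ] (Fin k → ℝ)) := fun y => (θ y).comp σ with hGdef
      have hGapp : ∀ y v, G y v = θ y (σ v) := fun y v => rfl
      have hG1 : G (x t₁) = 1 := ContinuousLinearMap.ext fun v => by
        rw [hGapp, hσ]; rfl
      have hGU : ContinuousOn G U := (hθ.continuousOn).clm_comp continuousOn_const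
      have hGx_at : ContinuousAt (fun t => G (x t)) t₁ :=
        (hGU.continuousAt (hUo.mem_nhds (hJU t₁ ht₁J))).comp
          (hxcont.continuousAt (hIo.mem_nhds ht₁I))
      have hunits : {t | IsUnit (G (x t))} ∈ nhds t₁ :=
        hGx_at.preimage_mem_nhds (Units.isOpen.mem_nhds (by rw [hG1]; exact isUnit_one))
      obtain ⟨ε₂, hε₂, hb2⟩ := Metric.mem_nhds_iff.1
        (Filter.inter_mem hunits (isOpen_Ioo.mem_nhds ht₁J))
      set J₂ := Set.Ioo (t₁ - ε₂) (t₁ + ε₂) with hJ₂def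
      have hJ₂b : J₂ ⊆ {t | IsUnit (G (x t))} ∩ J := by
        intro t ht; exact hb2 (by rw [Real.ball_eq_Ioo]; exact ht)
      have hJ₂J : J₂ ⊆ J := fun t ht => (hJ₂b ht).2
      have hJ₂unit : ∀ t ∈ J₂, IsUnit (G (x t)) := fun t ht => (hJ₂b ht).1
      set X : ℝ → E := fun t => Φ (c t) ((1:ℝ), (0:Λ)) with hXdef
      set w : ℝ → (Fin k → ℝ) := fun t => θ (x t) (g t) with hwdef
      set A : ℝ → ((Fin k → ℝ) →L[ℝ] (Fin k → ℝ)) := fun t =>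
        ((fderiv ℝ θ (x t) (X t)) - (fderiv ℝ θ (x t)).flip (X t)).comp
          (σ.comp (Ring.inverse (G (x t)))) with hAdef
      have hw0 : w t₁ = 0 := by
        have h1 : g t₁ ∈ LinearMap.ker (θ (x t₁) : E →ₗ[ℝ] (Fin k → ℝ)) := by
          rw [hθker _ (hJU t₁ ht₁J)]; exact hgD1
        exact h1
      have hderiv : ∀ t ∈ J₂, HasDerivAt w (A t (w t)) t := by
        intro t ht
        have htJ : t ∈ J := hJ₂J ht
        have htI' : t ∈ I := hJI htJ
        have hp' : c t ∈ Z := htI'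
        have hyU : x t ∈ U := hJU t htJ
        have hyunit : IsUnit (G (x t)) := hJ₂unit t ht
        have hc' : HasDerivAt c ((1:ℝ), (0:Λ)) t := (hasDerivAt_id t).prodMk (hasDerivAt_const t lam₀)
        have hx' : HasDerivAt x (X t) t := (hψdiffat _ hp').comp_hasDerivAt t hc'
        have hθat : HasFDerivAt θ (fderiv ℝ θ (x t)) (x t) :=
          ((hθ.differentiableOn (by simp)).differentiableAt (hUo.mem_nhds hyU)).hasFDerivAt
        have hθx : HasDerivAt (fun s => θ (x s)) ((fderiv ℝ θ (x t)) (X t)) t :=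
          hθat.comp_hasDerivAt t hx'
        have hΦat : HasFDerivAt Φ (fderiv ℝ Φ (c t)) (c t) :=
          ((hΦC1.differentiableOn one_ne_zero).differentiableAt (hZ.mem_nhds hp')).hasFDerivAt
        have hΦc : HasDerivAt (fun s => Φ (c s)) (fderiv ℝ Φ (c t) ((1:ℝ), (0:Λ))) t :=
          hΦat.comp_hasDerivAt t hc'
        have hg' : HasDerivAt g ((fderiv ℝ Φ (c t) ((1:ℝ), (0:Λ))) ((0:ℝ), u)) t := by
          have h2 := hΦc.clm_apply (hasDerivAt_const t ((0:ℝ), u))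
          simpa using h2
        have hw' : HasDerivAt w ((fderiv ℝ θ (x t)) (X t) (g t)
            + θ (x t) ((fderiv ℝ Φ (c t) ((1:ℝ), (0:Λ))) ((0:ℝ), u))) t :=
          hθx.clm_apply hg'
        have hsym : fderiv ℝ Φ (c t) ((1:ℝ),(0:Λ)) ((0:ℝ),u)
            = fderiv ℝ Φ (c t) ((0:ℝ),u) ((1:ℝ),(0:Λ)) := by
          refine second_derivative_symmetric_of_eventually (f := ψt) (f' := Φ) ?_ hΦat _ _
          filter_upwards [hZ.mem_nhds hp'] with q hq
          exact hψdiffat q hq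
        have hNmem : Z ∩ ψt ⁻¹' U ∈ nhds (c t) :=
          (hψt.continuousOn.isOpen_inter_preimage hZ hUo).mem_nhds ⟨hp', hyU⟩
        have hzeroH : (fun q => θ (ψt q) (Φ q ((1:ℝ),(0:Λ))))
            =ᶠ[nhds (c t)] (fun _ => (0 : Fin k → ℝ)) := by
          filter_upwards [hNmem] with q hq
          have h3 : Φ q ((1:ℝ),(0:Λ)) ∈ LinearMap.ker (θ (ψt q) : E →ₗ[ℝ] (Fin k → ℝ)) := by
            rw [hθker _ hq.2]; exact hhoriz q hq.1
          exact h3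
        have houter : HasFDerivAt (fun q => θ (ψt q))
            ((fderiv ℝ θ (x t)).comp (Φ (c t))) (c t) :=
          hθat.comp (c t) (hψdiffat _ hp')
        have hinner : HasFDerivAt (fun q => Φ q ((1:ℝ),(0:Λ)))
            ((fderiv ℝ Φ (c t)).flip ((1:ℝ),(0:Λ))) (c t) := by
          have h4 := hΦat.clm_apply (hasFDerivAt_const ((1:ℝ),(0:Λ)) (c t))
          simpa using h4
        have hH : HasFDerivAt (fun q => θ (ψt q) (Φ q ((1:ℝ),(0:Λ))))
            ((θ (x t)).comp ((fderiv ℝ Φ (c t)).flip ((1:ℝ),(0:Λ)))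
              + ((fderiv ℝ θ (x t)).comp (Φ (c t))).flip (Φ (c t) ((1:ℝ),(0:Λ)))) (c t) :=
          houter.clm_apply hinner
        have hDh0 : (θ (x t)).comp ((fderiv ℝ Φ (c t)).flip ((1:ℝ),(0:Λ)))
              + ((fderiv ℝ θ (x t)).comp (Φ (c t))).flip (Φ (c t) ((1:ℝ),(0:Λ))) = 0 := by
          rw [← hH.fderiv, hzeroH.fderiv_eq]
          exact fderiv_const_apply _
        have hkey : θ (x t) ((fderiv ℝ Φ (c t) ((0:ℝ),u)) ((1:ℝ),(0:Λ)))
            = - (fderiv ℝ θ (x t) (g t)) (X t) := by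
          have h5 := ContinuousLinearMap.ext_iff.1 hDh0 ((0:ℝ), u)
          simp only [ContinuousLinearMap.add_apply, ContinuousLinearMap.coe_comp',
            Function.comp_apply, ContinuousLinearMap.flip_apply,
            ContinuousLinearMap.zero_apply] at h5
          exact eq_neg_of_add_eq_zero_left h5
        set m : E := σ (Ring.inverse (G (x t)) (w t)) with hmdef
        have hθm : θ (x t) m = w t := by
          have h6 : θ (x t) m = (G (x t) * Ring.inverse (G (x t))) (w t) := rfl
          rw [h6, Ring.mul_inverse_cancel _ hyunit, ContinuousLinearMap.one_apply]
        have hvD : g t - m ∈ D (x t) := by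
          rw [← hθker _ hyU]
          have h7 : θ (x t) (g t - m) = 0 := by
            rw [map_sub, hθm]
            exact sub_self _
          exact h7
        have hXD' : X t ∈ D (x t) := hXD t htI'
        have hanti := levi_antisym D θ hUo hθ hθker Q hQ hQD hQid hyU (hLevi (c t) hp') hXD' hvD
        have e1 : (fderiv ℝ θ (x t)) (X t) (g t)
            = (fderiv ℝ θ (x t)) (X t) (g t - m) + (fderiv ℝ θ (x t)) (X t) m := by
          rw [← map_add, sub_add_cancel]
        have e2 : (fderiv ℝ θ (x t)) (g t) (X t)
            = (fderiv ℝ θ (x t)) (g t - m) (X t) + (fderiv ℝ θ (x t)) m (X t) := by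
          rw [← ContinuousLinearMap.add_apply, ← map_add, sub_add_cancel]
        have e3 : A t (w t) = (fderiv ℝ θ (x t)) (X t) m - (fderiv ℝ θ (x t)) m (X t) := by
          simp only [hAdef, ContinuousLinearMap.coe_comp', Function.comp_apply,
            ContinuousLinearMap.coe_sub', Pi.sub_apply, ContinuousLinearMap.flip_apply, hmdef]
        have hfinal : (fderiv ℝ θ (x t)) (X t) (g t) - (fderiv ℝ θ (x t)) (g t) (X t)
            = A t (w t) := by
          rw [e1, e2, e3, hanti]; abel
        have hassemble : (fderiv ℝ θ (x t)) (X t) (g t)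
            + θ (x t) ((fderiv ℝ Φ (c t) ((1:ℝ), (0:Λ))) ((0:ℝ), u)) = A t (w t) := by
          rw [hsym, hkey, ← hfinal]
          abel
        rw [← hassemble]
        exact hw'
      have hAcont : ContinuousOn A J₂ := by
        have hJ₂I : J₂ ⊆ I := fun t ht => hJI (hJ₂J ht)
        have hxc2 : ContinuousOn x J₂ := hxcont.mono hJ₂I
        have hXc : ContinuousOn X J₂ :=
          ((hΦC1.continuousOn.comp hccont.continuousOn hcI).mono hJ₂I).clm_apply
            continuousOn_const
        have hfθ : ContinuousOn (fun y => fderiv ℝ θ y) U :=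
          (hθ.fderiv_of_isOpen hUo (by exact WithTop.coe_le_coe.mpr le_top) : ContDiffOn ℝ 1 _ U).continuousOn
        have h1 : ContinuousOn (fun t => fderiv ℝ θ (x t)) J₂ :=
          hfθ.comp hxc2 (fun t ht => hJU t (hJ₂J ht))
        have h2 : ContinuousOn (fun t => (fderiv ℝ θ (x t)) (X t)) J₂ := h1.clm_apply hXc
        have h3 : ContinuousOn (fun t => (fderiv ℝ θ (x t)).flip) J₂ :=
          (ContinuousLinearMap.flipₗᵢ ℝ E E (Fin k → ℝ)).continuous.comp_continuousOn h1
        have h4 : ContinuousOn (fun t => (fderiv ℝ θ (x t)).flip (X t)) J₂ := h3.clm_apply hXc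
        have h5 : ContinuousOn (fun t => Ring.inverse (G (x t))) J₂ := by
          intro t ht
          have hcont1 : ContinuousAt (fun s => G (x s)) t :=
            (hGU.continuousAt (hUo.mem_nhds (hJU t (hJ₂J ht)))).comp
              (hxcont.continuousAt (hIo.mem_nhds (hJI (hJ₂J ht))))
          have hinv : ContinuousAt Ring.inverse (G (x t)) := by
            have h6 := NormedRing.inverse_continuousAt (hJ₂unit t ht).unit
            rwa [IsUnit.unit_spec] at h6
          exact (ContinuousAt.comp (f := fun s => G (x s)) (x := t) hinv hcont1).continuousWithinAt
        have h6 : ContinuousOn (fun t => σ.comp (Ring.inverse (G (x t)))) J₂ :=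
          continuousOn_const.clm_comp h5
        exact (h2.sub h4).clm_comp h6
      set ε₃ := ε₂ / 2 with hε₃def
      have hIcc : Set.Icc (t₁-ε₃) (t₁+ε₃) ⊆ J₂ := by
        intro t ht
        constructor
        · have := ht.1; simp only [hε₃def] at this ⊢; linarith
        · have := ht.2; simp only [hε₃def] at this ⊢; linarith
      obtain ⟨K, hK⟩ := isCompact_Icc.exists_bound_of_continuousOn (hAcont.mono hIcc)
      have hzero := linear_ODE_zero (A := A) (w := w) (t₀ := t₁)
        (a := t₁-ε₃) (b := t₁+ε₃)
        ⟨by simp [hε₃def]; linarith, by simp [hε₃def]; linarith⟩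
        (fun t ht2 => hK t (Set.Ioo_subset_Icc_self ht2))
        (fun t ht2 => hderiv t (hIcc (Set.Ioo_subset_Icc_self ht2))) hw0
      rw [nhds_subtype_eq_comap]
      refine Filter.mem_comap.2 ⟨Set.Ioo (t₁-ε₃) (t₁+ε₃),
        isOpen_Ioo.mem_nhds ⟨by simp [hε₃def]; linarith, by simp [hε₃def]; linarith⟩, ?_⟩
      rintro ⟨t, htI2⟩ ht3
      show g t ∈ D (x t)
      rw [← hθker (x t) (hJU t (hJ₂J (hIcc (Set.Ioo_subset_Icc_self ht3))))]
      exact LinearMap.mem_ker.mpr (hzero t ht3)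
  have : (⟨t₀, ht₀I⟩ : ↥I) ∈ S := hSuniv ▸ Set.mem_univ _
  exact this

theorem local_single_leaf_Frobenius
    {E M Λ : Type*} [NormedAddCommGroup E] [NormedSpace ℝ E]
    [NormedAddCommGroup M] [NormedSpace ℝ M]
    [NormedAddCommGroup Λ] [NormedSpace ℝ Λ]
    [FiniteDimensional ℝ E] [FiniteDimensional ℝ M] [FiniteDimensional ℝ Λ]
    (π : E → M) (hπ : ContDiff ℝ (⊤ : ℕ∞) π)
    (hsubm : ∀ x : E, Function.Surjective (fderiv ℝ π x))
    (D : E → Submodule ℝ E) (hD : IsSmoothDistribution D)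
    (hhor : ∀ x : E, IsCompl (LinearMap.ker (fderiv ℝ π x : E →ₗ[ℝ] M)) (D x))
    -- the `Λ`-parametric family of curves `ψ` with domain `Z`:
    (Z : Set (ℝ × Λ)) (hZ : IsOpen Z)
    (hslice : ∀ lam : Λ, (0, lam) ∈ Z ∧ {t : ℝ | (t, lam) ∈ Z}.OrdConnected)
    (ψ : ℝ × Λ → M) (hψ : ContDiffOn ℝ (⊤ : ℕ∞) ψ Z)
    -- local right inverse `α : V → Z` of `ψ`:
    (V : Set M) (hV : IsOpen V) (α : M → ℝ × Λ) (hα : ContDiffOn ℝ (⊤ : ℕ∞) α V)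
    (hαZ : ∀ m ∈ V, α m ∈ Z) (hψα : ∀ m ∈ V, ψ (α m) = m)
    -- the family of horizontal liftings `ψ̃`:
    (ψt : ℝ × Λ → E) (hψt : ContDiffOn ℝ (⊤ : ℕ∞) ψt Z)
    (hlift : ∀ p ∈ Z, π (ψt p) = ψ p)
    (hhoriz : ∀ p ∈ Z, fderivWithin ℝ ψt Z p (1, 0) ∈ D (ψt p))
    -- (a) the Levi form of `D` vanishes on the range of `ψ̃`:
    (hLevi : ∀ p ∈ Z, LeviFormVanishesAt D (ψt p))
    -- (b) `∂_λ ψ̃(0, λ)` takes values in `D`: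
    (hb : ∀ lam : Λ, ∀ u : Λ, fderivWithin ℝ ψt Z (0, lam) (0, u) ∈ D (ψt (0, lam))) :
    -- conclusion: `s = ψ̃ ∘ α` is a local horizontal section of `π` on `V`.
    (∀ m ∈ V, π (ψt (α m)) = m) ∧
    (∀ m ∈ V, LinearMap.range (fderivWithin ℝ (fun m' => ψt (α m')) V m : M →ₗ[ℝ] E) = D (ψt (α m))) := by
  have hπV : ∀ m ∈ V, π (ψt (α m)) = m := fun m hm => by
    rw [hlift _ (hαZ _ hm), hψα _ hm]
  refine ⟨hπV, ?_⟩
  intro m hm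
  have hhoriz' : ∀ p ∈ Z, fderiv ℝ ψt p ((1:ℝ), (0:Λ)) ∈ D (ψt p) := by
    intro p hp; rw [← fderivWithin_of_isOpen hZ hp]; exact hhoriz p hp
  have hb' : ∀ lam : Λ, ∀ u : Λ, fderiv ℝ ψt ((0:ℝ), lam) ((0:ℝ), u) ∈ D (ψt (0, lam)) := by
    intro lam u; rw [← fderivWithin_of_isOpen hZ (hslice lam).1]; exact hb lam u
  obtain ⟨Q, hQ, hQD, hQid⟩ := exists_proj π hπ hsubm D hD hhor
  have keyC := horizontal_propagation D hD Q hQ hQD hQid Z hZ hslice ψt hψt hhoriz' hLevi hb'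
  set p := α m with hpdef
  have hpZ : p ∈ Z := hαZ m hm
  have hαdiff : DifferentiableAt ℝ α m :=
    (hα.differentiableOn (by simp)).differentiableAt (hV.mem_nhds hm)
  have hψtdiff : DifferentiableAt ℝ ψt p :=
    (hψt.differentiableOn (by simp)).differentiableAt (hZ.mem_nhds hpZ)
  have hcomp : HasFDerivAt (fun m' => ψt (α m'))
      ((fderiv ℝ ψt p).comp (fderiv ℝ α m)) m :=
    hψtdiff.hasFDerivAt.comp m hαdiff.hasFDerivAt
  have hfw : fderivWithin ℝ (fun m' => ψt (α m')) V m
      = (fderiv ℝ ψt p).comp (fderiv ℝ α m) := by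
    rw [fderivWithin_of_isOpen hV hm]; exact hcomp.fderiv
  rw [hfw]
  -- the range is contained in D
  have hsub : LinearMap.range (((fderiv ℝ ψt p).comp (fderiv ℝ α m)) : M →ₗ[ℝ] E) ≤ D (ψt p) := by
    rintro _ ⟨v, rfl⟩
    show (fderiv ℝ ψt p) ((fderiv ℝ α m) v) ∈ D (ψt p)
    have hdecomp : (fderiv ℝ α m) v
        = ((fderiv ℝ α m) v).1 • ((1:ℝ), (0:Λ)) + ((0:ℝ), ((fderiv ℝ α m) v).2) := by
      ext <;> simp
    rw [hdecomp, map_add, map_smul]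
    exact Submodule.add_mem _ (Submodule.smul_mem _ _ (hhoriz' p hpZ))
      (keyC p hpZ ((fderiv ℝ α m) v).2)
  -- the composition with dπ is the identity
  have hπdiff : HasFDerivAt π (fderiv ℝ π (ψt p)) (ψt p) :=
    ((hπ.differentiable (by simp)) _).hasFDerivAt
  have hcomp2 : HasFDerivAt (fun m' => π (ψt (α m')))
      ((fderiv ℝ π (ψt p)).comp ((fderiv ℝ ψt p).comp (fderiv ℝ α m))) m :=
    hπdiff.comp m hcomp
  have hev : (fun m' => π (ψt (α m'))) =ᶠ[nhds m] id := by
    filter_upwards [hV.mem_nhds hm] with m' hm'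
    exact hπV m' hm'
  have hid : (fderiv ℝ π (ψt p)).comp ((fderiv ℝ ψt p).comp (fderiv ℝ α m))
      = ContinuousLinearMap.id ℝ M := by
    rw [← hcomp2.fderiv, hev.fderiv_eq, fderiv_id]
  have hinj : Function.Injective ((fderiv ℝ ψt p).comp (fderiv ℝ α m)) := by
    intro v1 v2 h12
    have h1 := ContinuousLinearMap.ext_iff.1 hid v1
    have h2 := ContinuousLinearMap.ext_iff.1 hid v2
    simp only [ContinuousLinearMap.coe_comp', Function.comp_apply,
      ContinuousLinearMap.coe_id', id_eq] at h1 h2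
    have h12' : (fderiv ℝ ψt p) ((fderiv ℝ α m) v1)
        = (fderiv ℝ ψt p) ((fderiv ℝ α m) v2) := by simpa using h12
    rw [← h1, ← h2, h12']
  -- dimension count
  have hdimD : finrank ℝ (D (ψt p)) = finrank ℝ M := by
    have h1 := Submodule.finrank_add_eq_of_isCompl (hhor (ψt p))
    have h2 := LinearMap.finrank_range_add_finrank_ker (fderiv ℝ π (ψt p) : E →ₗ[ℝ] M)
    have h3 : LinearMap.range (fderiv ℝ π (ψt p) : E →ₗ[ℝ] M) = ⊤ :=
      LinearMap.range_eq_top.2 (by simpa using hsubm (ψt p))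
    have h4 : LinearMap.ker ((fderiv ℝ π (ψt p) : E →ₗ[ℝ] M))
        = LinearMap.ker (fderiv ℝ π (ψt p) : E →ₗ[ℝ] M) := rfl
    rw [h3, finrank_top, h4] at h2
    omega
  have hrange : finrank ℝ (LinearMap.range (((fderiv ℝ ψt p).comp (fderiv ℝ α m)) : M →ₗ[ℝ] E))
      = finrank ℝ M := by
    have h5 : LinearMap.range ((((fderiv ℝ ψt p).comp (fderiv ℝ α m)) : M →ₗ[ℝ] E))
        = LinearMap.range (((fderiv ℝ ψt p).comp (fderiv ℝ α m)) : M →ₗ[ℝ] E) := rfl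
    rw [← h5, LinearMap.finrank_range_of_inj (by exact hinj)]
  exact Submodule.eq_of_le_of_finrank_le hsub (by rw [hdimD, hrange])
end

section
/- Let S be a spray on M with maximal flow F defined on an open subset of ℝ × TM. For all t, s ∈ ℝ and v ∈ TM, (t, sv) is in the domain of F if and only if (ts, v) is in the domain of F, and in that case F(t, sv) = s·F(ts, v). -/
/-!
STATEMENT 7 (homogeneity of the flow of a spray).

Chart picture: `M` is a finite-dimensional real normed space, `TM = M × M`, and a spray is a
smooth vector field `S : M × M → M × M` (principal part) satisfying the second-order
condition and the homogeneity condition.  `F` is the maximal flow of `S`, with open domain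
`Dom ⊆ ℝ × TM`; maximality is expressed by saying that every solution of the ODE defined on
an open interval around `0` stays in the domain and coincides with `F`.  Fiberwise scalar
multiplication on `TM` is `m_s (x, u) = (x, s • u)`.

Conclusion: `(t, s•v) ∈ Dom ↔ (t*s, v) ∈ Dom`, and in that case
`F t (s•v) = m_s (F (t*s) v)`.
-/

/-- Fiberwise multiplication by `s` on `TM = M × M`. -/
def fiberSMul {M : Type*} [NormedAddCommGroup M] [NormedSpace ℝ M]
    (s : ℝ) (v : M × M) : M × M := (v.1, s • v.2)

/-- `F` is the maximal flow of the vector field `S` on `TM = M × M`, with domain `Dom`. -/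
structure IsMaximalFlow {M : Type*} [NormedAddCommGroup M] [NormedSpace ℝ M]
    (S : M × M → M × M) (Dom : Set (ℝ × (M × M))) (F : ℝ → M × M → M × M) : Prop where
  isOpen : IsOpen Dom
  mem_zero : ∀ v, (0, v) ∈ Dom
  slice_ordConnected : ∀ v, {t : ℝ | (t, v) ∈ Dom}.OrdConnected
  init : ∀ v, F 0 v = v
  hasDeriv : ∀ v t, (t, v) ∈ Dom → HasDerivAt (fun τ => F τ v) (S (F t v)) t
  maximal : ∀ (v : M × M) (γ : ℝ → M × M) (J : Set ℝ), IsOpen J → J.OrdConnected →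
    (0 : ℝ) ∈ J → γ 0 = v → (∀ t ∈ J, HasDerivAt γ (S (γ t)) t) →
    ∀ t ∈ J, (t, v) ∈ Dom ∧ γ t = F t v


theorem spray_key
    {M : Type*} [NormedAddCommGroup M] [NormedSpace ℝ M]
    (S : M × M → M × M)
    (h2 : ∀ (a : ℝ) (x u : M),
      S (x, a • u) = (a • (S (x, u)).1, (a * a) • (S (x, u)).2))
    (Dom : Set (ℝ × (M × M))) (F : ℝ → M × M → M × M)
    (hF : IsMaximalFlow S Dom F)
    (t s : ℝ) (v : M × M) (ht : (t * s, v) ∈ Dom) :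
    (t, fiberSMul s v) ∈ Dom ∧ F t (fiberSMul s v) = fiberSMul s (F (t * s) v) := by
  set J : Set ℝ := {τ : ℝ | (τ * s, v) ∈ Dom} with hJ
  have hJopen : IsOpen J := by
    have : Continuous (fun τ : ℝ => ((τ * s, v) : ℝ × (M × M))) := by fun_prop
    exact hF.isOpen.preimage this
  have hJoc : J.OrdConnected := by
    constructor
    intro a ha b hb c hc
    rcases le_or_gt 0 s with hs | hs
    · have h1 : a * s ≤ c * s := mul_le_mul_of_nonneg_right hc.1 hs
      have h2' : c * s ≤ b * s := mul_le_mul_of_nonneg_right hc.2 hs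
      exact (hF.slice_ordConnected v).out ha hb ⟨h1, h2'⟩
    · have h1 : b * s ≤ c * s := mul_le_mul_of_nonpos_right hc.2 hs.le
      have h2' : c * s ≤ a * s := mul_le_mul_of_nonpos_right hc.1 hs.le
      exact (hF.slice_ordConnected v).out hb ha ⟨h1, h2'⟩
  have h0J : (0 : ℝ) ∈ J := by simp [hJ, hF.mem_zero v]
  set L : (M × M) →L[ℝ] (M × M) :=
    (ContinuousLinearMap.fst ℝ M M).prod (s • ContinuousLinearMap.snd ℝ M M) with hL
  set γ : ℝ → M × M := fun τ => fiberSMul s (F (τ * s) v) with hγ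
  have hγ0 : γ 0 = fiberSMul s v := by simp [hγ, hF.init v]
  have hderiv : ∀ τ ∈ J, HasDerivAt γ (S (γ τ)) τ := by
    intro τ hτ
    have hc : HasDerivAt (fun u => F u v) (S (F (τ * s) v)) (τ * s) := hF.hasDeriv v _ hτ
    have hmul : HasDerivAt (fun τ : ℝ => τ * s) s τ := by
      simpa using (hasDerivAt_id τ).mul_const s
    have hc2 : HasDerivAt (fun τ : ℝ => F (τ * s) v) (s • S (F (τ * s) v)) τ := by
      simpa [Function.comp_def] using hc.scomp τ hmul
    have hc3 : HasDerivAt γ (L (s • S (F (τ * s) v))) τ :=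
      L.hasFDerivAt.comp_hasDerivAt τ hc2
    have : L (s • S (F (τ * s) v)) = S (γ τ) := by
      have := h2 s (F (τ * s) v).1 (F (τ * s) v).2
      simp only [hγ, fiberSMul, hL]
      ext
      · simp [this]
      · simp [this, smul_smul]
    rwa [this] at hc3
  have := hF.maximal (fiberSMul s v) γ J hJopen hJoc h0J hγ0 hderiv t ht
  exact ⟨this.1, this.2.symm⟩

theorem spray_flow_homogeneity
    {M : Type*} [NormedAddCommGroup M] [NormedSpace ℝ M] [FiniteDimensional ℝ M]
    (S : M × M → M × M) (hS : ContDiff ℝ (⊤ : ℕ∞) S)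
    (h1 : ∀ v : M × M, (S v).1 = v.2)
    (h2 : ∀ (a : ℝ) (x u : M),
      S (x, a • u) = (a • (S (x, u)).1, (a * a) • (S (x, u)).2))
    (Dom : Set (ℝ × (M × M))) (F : ℝ → M × M → M × M)
    (hF : IsMaximalFlow S Dom F)
    (t s : ℝ) (v : M × M) :
    ((t, fiberSMul s v) ∈ Dom ↔ (t * s, v) ∈ Dom) ∧
    ((t, fiberSMul s v) ∈ Dom → F t (fiberSMul s v) = fiberSMul s (F (t * s) v)) := by
  have hiff : (t, fiberSMul s v) ∈ Dom ↔ (t * s, v) ∈ Dom := by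
    constructor
    · intro hv
      rcases eq_or_ne s 0 with rfl | hs
      · simpa using hF.mem_zero v
      · have := (spray_key S h2 Dom F hF (t * s) s⁻¹ (fiberSMul s v)
          (by rwa [mul_assoc, mul_inv_cancel₀ hs, mul_one])).1
        have hfs : fiberSMul s⁻¹ (fiberSMul s v) = v := by
          simp [fiberSMul, smul_smul, inv_mul_cancel₀ hs]
        rwa [hfs] at this
    · intro hv
      exact (spray_key S h2 Dom F hF t s v hv).1
  exact ⟨hiff, fun hv => (spray_key S h2 Dom F hF t s v (hiff.mp hv)).2⟩
end

section
/- Let S be a spray on M and exp its exponential map, defined by exp(v) = π(F(1,v)) on the set of v ∈ TM with (1,v) in the domain of the flow F. For x ∈ M and v ∈ T_xM, the set {s ∈ ℝ : sv ∈ Dom(exp)} is an open interval containing 0, and γ(s) = exp(sv) defined on this interval is the maximal solution of S with γ(0) = x and γ'(0) = v. -/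
/-- Rescaling lemma: if `(s*t, v₀) ∈ Dom` then `(t, s ·fib v₀) ∈ Dom` and
`F t (s ·fib v₀) = s ·fib F (s*t) v₀`. -/
theorem spray_rescale {M : Type*} [NormedAddCommGroup M] [NormedSpace ℝ M]
    {S : M × M → M × M}
    (h2 : ∀ (a : ℝ) (x u : M),
      S (x, a • u) = (a • (S (x, u)).1, (a * a) • (S (x, u)).2))
    {Dom : Set (ℝ × (M × M))} {F : ℝ → M × M → M × M}
    (hF : IsMaximalFlow S Dom F) (s : ℝ) (v0 : M × M) :
    ∀ t, (s * t, v0) ∈ Dom →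
      (t, fiberSMul s v0) ∈ Dom ∧ F t (fiberSMul s v0) = fiberSMul s (F (s * t) v0) := by
  set K : Set ℝ := {t : ℝ | (t, v0) ∈ Dom} with hK
  have hKopen : IsOpen K := by
    have : K = (fun t : ℝ => (t, v0)) ⁻¹' Dom := rfl
    rw [this]
    exact hF.isOpen.preimage (by fun_prop)
  set J : Set ℝ := {τ : ℝ | (s * τ, v0) ∈ Dom} with hJ
  have hJopen : IsOpen J := by
    have : J = (fun τ : ℝ => (s * τ, v0)) ⁻¹' Dom := rfl
    rw [this]
    exact hF.isOpen.preimage (by fun_prop)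
  have hJoc : J.OrdConnected := by
    constructor
    intro a ha b hb c hc
    have hKoc := hF.slice_ordConnected v0
    rcases le_total 0 s with hs | hs
    · have h1 : s * a ≤ s * c := mul_le_mul_of_nonneg_left hc.1 hs
      have h2' : s * c ≤ s * b := mul_le_mul_of_nonneg_left hc.2 hs
      exact hKoc.out ha hb ⟨h1, h2'⟩
    · have h1 : s * b ≤ s * c := mul_le_mul_of_nonpos_left hc.2 hs
      have h2' : s * c ≤ s * a := mul_le_mul_of_nonpos_left hc.1 hs
      exact hKoc.out hb ha ⟨h1, h2'⟩
  have h0J : (0 : ℝ) ∈ J := by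
    show (s * 0, v0) ∈ Dom
    rw [mul_zero]; exact hF.mem_zero v0
  have hinit : fiberSMul s (F (s * 0) v0) = fiberSMul s v0 := by
    rw [mul_zero, hF.init]
  have hderiv : ∀ τ ∈ J, HasDerivAt (fun τ => fiberSMul s (F (s * τ) v0))
      (S (fiberSMul s (F (s * τ) v0))) τ := by
    intro τ hτ
    have hD : HasDerivAt (fun t => F t v0) (S (F (s * τ) v0)) (s * τ) :=
      hF.hasDeriv v0 (s * τ) hτ
    have hmul : HasDerivAt (fun τ : ℝ => s * τ) s τ := by
      simpa using (hasDerivAt_id τ).const_mul s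
    have hcomp : HasDerivAt (fun τ => F (s * τ) v0) (s • S (F (s * τ) v0)) τ :=
      HasDerivAt.scomp τ hD hmul
    have hfst : HasDerivAt (fun τ => (F (s * τ) v0).1) ((s • S (F (s * τ) v0)).1) τ :=
      (ContinuousLinearMap.fst ℝ M M).hasFDerivAt.comp_hasDerivAt τ hcomp
    have hsnd : HasDerivAt (fun τ => (F (s * τ) v0).2) ((s • S (F (s * τ) v0)).2) τ :=
      (ContinuousLinearMap.snd ℝ M M).hasFDerivAt.comp_hasDerivAt τ hcomp
    have hsnd' : HasDerivAt (fun τ => s • (F (s * τ) v0).2)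
        (s • (s • S (F (s * τ) v0)).2) τ := hsnd.const_smul s
    have := hfst.prodMk hsnd'
    have heq : S (fiberSMul s (F (s * τ) v0))
        = ((s • S (F (s * τ) v0)).1, s • (s • S (F (s * τ) v0)).2) := by
      show S ((F (s * τ) v0).1, s • (F (s * τ) v0).2) = _
      rw [h2 s (F (s * τ) v0).1 (F (s * τ) v0).2]
      simp [Prod.smul_def, smul_smul]
    rw [heq]
    exact this
  intro t ht
  have := hF.maximal (fiberSMul s v0) (fun τ => fiberSMul s (F (s * τ) v0)) J
    hJopen hJoc h0J hinit hderiv t ht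
  exact ⟨this.1, this.2.symm⟩

theorem exp_radial_is_maximal_solution
    {M : Type*} [NormedAddCommGroup M] [NormedSpace ℝ M] [FiniteDimensional ℝ M]
    (S : M × M → M × M) (hS : ContDiff ℝ (⊤ : ℕ∞) S)
    (h1 : ∀ v : M × M, (S v).1 = v.2)
    (h2 : ∀ (a : ℝ) (x u : M),
      S (x, a • u) = (a • (S (x, u)).1, (a * a) • (S (x, u)).2))
    (Dom : Set (ℝ × (M × M))) (F : ℝ → M × M → M × M)
    (hF : IsMaximalFlow S Dom F)
    (x v : M) :
    -- `J = {s | s•v ∈ Dom(exp)}`, `γ s = exp (s•v)`: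
    letI J : Set ℝ := {s : ℝ | (1, fiberSMul s (x, v)) ∈ Dom}
    letI γ : ℝ → M := fun s => (F 1 (fiberSMul s (x, v))).1
    -- `J` is an open interval containing `0` ...
    IsOpen J ∧ J.OrdConnected ∧ (0 : ℝ) ∈ J ∧
    -- ... `γ` is a solution of the spray `S` on `J` with `γ 0 = x`, `γ' 0 = v` ...
    γ 0 = x ∧ deriv γ 0 = v ∧
    (∀ s ∈ J, HasDerivAt (fun τ => (γ τ, deriv γ τ)) (S (γ s, deriv γ s)) s) ∧
    -- ... and `γ` is maximal among such solutions.
    (∀ (δ : ℝ → M) (J' : Set ℝ), IsOpen J' → J'.OrdConnected → (0 : ℝ) ∈ J' →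
      δ 0 = x → deriv δ 0 = v →
      (∀ s ∈ J', HasDerivAt (fun τ => (δ τ, deriv δ τ)) (S (δ s, deriv δ s)) s) →
      J' ⊆ J ∧ Set.EqOn δ γ J') := by
  set J : Set ℝ := {s : ℝ | (1, fiberSMul s (x, v)) ∈ Dom} with hJdef
  set γ : ℝ → M := fun s => (F 1 (fiberSMul s (x, v))).1 with hγdef
  -- the flow slice at (x,v)
  set D : Set ℝ := {s : ℝ | (s, (x, v)) ∈ Dom} with hD
  set g : ℝ → M × M := fun s => F s (x, v) with hg
  -- J = D
  have hJD : J = D := by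
    ext s
    constructor
    · intro hs
      by_cases h0 : s = 0
      · subst h0; exact hF.mem_zero (x, v)
      · have hpre : (s⁻¹ * s, fiberSMul s (x, v)) ∈ Dom := by
          rw [inv_mul_cancel₀ h0]; exact hs
        have := (spray_rescale h2 hF s⁻¹ (fiberSMul s (x, v)) s hpre).1
        have hfib : fiberSMul s⁻¹ (fiberSMul s (x, v)) = (x, v) := by
          simp [fiberSMul, smul_smul, inv_mul_cancel₀ h0]
        rwa [hfib] at this
    · intro hs
      have hpre : (s * 1, (x, v)) ∈ Dom := by rwa [mul_one]
      exact (spray_rescale h2 hF s (x, v) 1 hpre).1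
  -- flow identity on J
  have hflow : ∀ s ∈ J, F 1 (fiberSMul s (x, v)) = fiberSMul s (g s) := by
    intro s hs
    have hsD : s ∈ D := hJD ▸ hs
    have hpre : (s * 1, (x, v)) ∈ Dom := by rwa [mul_one]
    have := (spray_rescale h2 hF s (x, v) 1 hpre).2
    rwa [mul_one] at this
  have hDopen : IsOpen D := by
    have : D = (fun s : ℝ => (s, (x, v))) ⁻¹' Dom := rfl
    rw [this]; exact hF.isOpen.preimage (by fun_prop)
  have hJopen : IsOpen J := hJD ▸ hDopen
  have hJoc : J.OrdConnected := hJD ▸ hF.slice_ordConnected (x, v)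
  have h0J : (0 : ℝ) ∈ J := hJD ▸ hF.mem_zero (x, v)
  -- γ agrees with (g ·).1 on J
  have hγeq : ∀ s ∈ J, γ s = (g s).1 := by
    intro s hs
    show (F 1 (fiberSMul s (x, v))).1 = (g s).1
    rw [hflow s hs]; rfl
  -- derivative of γ on J
  have hγderiv : ∀ s ∈ J, HasDerivAt γ ((g s).2) s := by
    intro s hs
    have hsD : s ∈ D := hJD ▸ hs
    have hgd : HasDerivAt g (S (g s)) s := hF.hasDeriv (x, v) s hsD
    have hfst : HasDerivAt (fun τ => (g τ).1) ((S (g s)).1) s :=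
      (ContinuousLinearMap.fst ℝ M M).hasFDerivAt.comp_hasDerivAt s hgd
    rw [h1 (g s)] at hfst
    refine hfst.congr_of_eventuallyEq ?_
    exact Filter.eventually_of_mem (hJopen.mem_nhds hs) hγeq
  have hderivγ : ∀ s ∈ J, deriv γ s = (g s).2 := fun s hs => (hγderiv s hs).deriv
  -- pair identity on J
  have hpair : ∀ s ∈ J, (γ s, deriv γ s) = g s := by
    intro s hs
    rw [hγeq s hs, hderivγ s hs]
  -- γ 0 = x, deriv γ 0 = v
  have hγ0 : γ 0 = x := by
    rw [hγeq 0 h0J]; show (F 0 (x, v)).1 = x; rw [hF.init]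
  have hγ'0 : deriv γ 0 = v := by
    rw [hderivγ 0 h0J]; show (F 0 (x, v)).2 = v; rw [hF.init]
  refine ⟨hJopen, hJoc, h0J, hγ0, hγ'0, ?_, ?_⟩
  · -- solution of the spray on J
    intro s hs
    have hsD : s ∈ D := hJD ▸ hs
    have hgd : HasDerivAt g (S (g s)) s := hF.hasDeriv (x, v) s hsD
    have : HasDerivAt (fun τ => (γ τ, deriv γ τ)) (S (g s)) s := by
      refine hgd.congr_of_eventuallyEq ?_
      exact Filter.eventually_of_mem (hJopen.mem_nhds hs) hpair
    rwa [← hpair s hs] at this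
  · -- maximality
    intro δ J' hJ'open hJ'oc h0J' hδ0 hδ'0 hδsol
    have hmax := hF.maximal (x, v) (fun τ => (δ τ, deriv δ τ)) J' hJ'open hJ'oc h0J'
      (show (δ 0, deriv δ 0) = (x, v) by rw [hδ0, hδ'0]) hδsol
    have hsub : J' ⊆ J := by
      intro s hs
      rw [hJD]
      exact (hmax s hs).1
    refine ⟨hsub, ?_⟩
    intro s hs
    rw [hγeq s (hsub hs)]
    exact congrArg Prod.fst (hmax s hs).2
end

section
/- Let M be a smooth manifold, ∇ a symmetric connection on TM, m₀ ∈ M, and g₀ a nondegenerate symmetric bilinear form on T_{m₀}M. Let ψ : Z ⊂ ℝ × Λ → M be a Λ-parametric family of curves with ψ(0,λ) = m₀ for all λ, admitting a local right inverse α : V → Z. Denote by P_{(t,λ)} : T_{m₀}M → T_{ψ(t,λ)}M parallel transport along t ↦ ψ(t,λ). If for all (t,λ) ∈ Z and all v, w ∈ T_{ψ(t,λ)}M the operator P_{(t,λ)}^{-1} ∘ R_{ψ(t,λ)}(v,w) ∘ P_{(t,λ)} on T_{m₀}M is g₀-anti-symmetric, then ∇ is the Levi-Civita connection of the semi-Riemannian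 metric g on V defined by g_m(·,·) = g₀(P_{α(m)}^{-1}·, P_{α(m)}^{-1}·). -/
section helpers

variable {E F G : Type*} [NormedAddCommGroup E] [NormedSpace ℝ E]
  [NormedAddCommGroup F] [NormedSpace ℝ F] [NormedAddCommGroup G] [NormedSpace ℝ G]

lemma line_hasDerivAt (p ζ : E) (s : ℝ) : HasDerivAt (fun s : ℝ => p + s • ζ) ζ s := by
  simpa using ((hasDerivAt_id s).smul_const ζ).const_add p

lemma dirD {f : E → F} {p : E} (hf : DifferentiableAt ℝ f p) (ζ : E) :
    HasDerivAt (fun s : ℝ => f (p + s • ζ)) (fderiv ℝ f p ζ) 0 := by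
  have h2 : HasFDerivAt f (fderiv ℝ f p) ((fun s : ℝ => p + s • ζ) 0) := by
    simpa using hf.hasFDerivAt
  simpa [Function.comp_def] using h2.comp_hasDerivAt 0 (line_hasDerivAt p ζ 0)

lemma dirT {Λ : Type*} [NormedAddCommGroup Λ] [NormedSpace ℝ Λ]
    {f : ℝ × Λ → F} {τ : ℝ} {lam : Λ} (hf : DifferentiableAt ℝ f (τ, lam)) :
    HasDerivAt (fun s : ℝ => f (s, lam)) (fderiv ℝ f (τ, lam) (1, 0)) τ := by
  have h1 : HasDerivAt (fun s : ℝ => (s, lam)) ((1:ℝ), (0:Λ)) τ :=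
    (hasDerivAt_id τ).prodMk (hasDerivAt_const τ lam)
  simpa [Function.comp_def] using hf.hasFDerivAt.comp_hasDerivAt τ h1

lemma fderiv_eval_dir {f : E → F →L[ℝ] G} {p : E} (hf : DifferentiableAt ℝ f p) (w : F) (ζ : E) :
    fderiv ℝ (fun q => f q w) p ζ = fderiv ℝ f p ζ w := by
  have h := fderiv_clm_apply hf (differentiableAt_const w)
  rw [h]; simp

end helpers

/-- The curvature tensor of the connection with Christoffel symbol `Γ`, in the chart. -/
noncomputable def curvOf {M : Type*} [NormedAddCommGroup M] [NormedSpace ℝ M]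
    (Γ : M → M →L[ℝ] M →L[ℝ] M) (x : M) (v w : M) (ξ : M) : M :=
  (fderiv ℝ Γ x v) w ξ - (fderiv ℝ Γ x w) v ξ + Γ x v (Γ x w ξ) - Γ x w (Γ x v ξ)

set_option maxHeartbeats 2000000 in
theorem metric_from_parallel_transport
    {M Λ : Type*} [NormedAddCommGroup M] [NormedSpace ℝ M] [FiniteDimensional ℝ M]
    [NormedAddCommGroup Λ] [NormedSpace ℝ Λ] [FiniteDimensional ℝ Λ]
    (Γ : M → M →L[ℝ] M →L[ℝ] M) (hΓ : ContDiff ℝ (⊤ : ℕ∞) Γ)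
    -- `∇` is symmetric (torsion-free):
    (hsymm : ∀ x v w, Γ x v w = Γ x w v)
    (m₀ : M) (g₀ : M →L[ℝ] M →L[ℝ] ℝ)
    (hg₀symm : ∀ a b, g₀ a b = g₀ b a)
    (hg₀nondeg : ∀ a, (∀ b, g₀ a b = 0) → a = 0)
    -- the `Λ`-parametric family of curves `ψ` with `ψ(0,λ) = m₀`:
    (Z : Set (ℝ × Λ)) (hZ : IsOpen Z)
    (hslice : ∀ lam : Λ, (0, lam) ∈ Z ∧ {t : ℝ | (t, lam) ∈ Z}.OrdConnected)
    (ψ : ℝ × Λ → M) (hψ : ContDiffOn ℝ (⊤ : ℕ∞) ψ Z)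
    (hψ0 : ∀ lam : Λ, ψ (0, lam) = m₀)
    -- the local right inverse `α : V → Z`:
    (V : Set M) (hV : IsOpen V) (α : M → ℝ × Λ) (hα : ContDiffOn ℝ (⊤ : ℕ∞) α V)
    (hαZ : ∀ m ∈ V, α m ∈ Z) (hψα : ∀ m ∈ V, ψ (α m) = m)
    -- parallel transport `P (t,λ)` along `t ↦ ψ (t,λ)`:
    (P : ℝ × Λ → (M ≃L[ℝ] M))
    (hP0 : ∀ lam : Λ, P (0, lam) = ContinuousLinearEquiv.refl ℝ M)
    (hPode : ∀ (lam : Λ) (v : M) (t : ℝ), (t, lam) ∈ Z →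
      HasDerivAt (fun τ => P (τ, lam) v)
        (-(Γ (ψ (t, lam)) (fderivWithin ℝ ψ Z (t, lam) (1, 0)) (P (t, lam) v))) t)
    (hPsmooth : ContDiffOn ℝ (⊤ : ℕ∞) (fun p => (P p : M →L[ℝ] M)) Z)
    (hPsmooth' : ContDiffOn ℝ (⊤ : ℕ∞) (fun p => ((P p).symm : M →L[ℝ] M)) Z)
    -- the anti-symmetry hypothesis: `P⁻¹ ∘ R(v,w) ∘ P` is `g₀`-anti-symmetric on `Z`:
    (hanti : ∀ p ∈ Z, ∀ v w a b : M,
      g₀ ((P p).symm (curvOf Γ (ψ p) v w (P p a))) b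
        = -(g₀ a ((P p).symm (curvOf Γ (ψ p) v w (P p b))))) :
    letI A : M → (M →L[ℝ] M) := fun m => ((P (α m)).symm : M →L[ℝ] M)
    letI G : M → (M →L[ℝ] M →L[ℝ] ℝ) := fun m =>
      ((ContinuousLinearMap.compL ℝ M M ℝ).flip (A m)).comp (g₀.comp (A m))
    (∀ m ∈ V, ∀ a b, G m a b = G m b a) ∧
    (∀ m ∈ V, ∀ a, (∀ b, G m a b = 0) → a = 0) ∧
    (∀ m ∈ V, ∀ z a b : M,
      fderivWithin ℝ G V m z a b = G m (Γ m z a) b + G m a (Γ m z b)) := by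
  beta_reduce
  have hGval : ∀ pa : ℝ × Λ, ∀ a b : M,
      (((ContinuousLinearMap.compL ℝ M M ℝ).flip (((P pa).symm : M →L[ℝ] M))).comp
        (g₀.comp (((P pa).symm : M →L[ℝ] M)))) a b = g₀ ((P pa).symm a) ((P pa).symm b) := by
    intro pa a b; simp [ContinuousLinearMap.compL_apply]
  set Pc : ℝ × Λ → M →L[ℝ] M := fun p => (P p : M →L[ℝ] M) with hPcdef
  set Pinv : ℝ × Λ → M →L[ℝ] M := fun p => ((P p).symm : M →L[ℝ] M) with hPinvdef
  have memZ : ∀ p ∈ Z, Z ∈ nhds p := fun p hp => hZ.mem_nhds hp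
  have hψat : ∀ p ∈ Z, ContDiffAt ℝ (⊤ : ℕ∞) ψ p := fun p hp => hψ.contDiffAt (memZ p hp)
  have hψD : ∀ p ∈ Z, DifferentiableAt ℝ ψ p := fun p hp => (hψat p hp).differentiableAt (by simp)
  have hPcat : ∀ p ∈ Z, ContDiffAt ℝ (⊤ : ℕ∞) Pc p := fun p hp => hPsmooth.contDiffAt (memZ p hp)
  have hPcD : ∀ p ∈ Z, DifferentiableAt ℝ Pc p := fun p hp => (hPcat p hp).differentiableAt (by simp)
  have hPiat : ∀ p ∈ Z, ContDiffAt ℝ (⊤ : ℕ∞) Pinv p := fun p hp => hPsmooth'.contDiffAt (memZ p hp)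
  have hPiD : ∀ p ∈ Z, DifferentiableAt ℝ Pinv p := fun p hp => (hPiat p hp).differentiableAt (by simp)
  have hψ2 : ∀ p ∈ Z, DifferentiableAt ℝ (fderiv ℝ ψ) p := fun p hp =>
    ((hψat p hp).fderiv_right (m := (⊤ : ℕ∞)) (by simp)).differentiableAt (by simp)
  have hPc2 : ∀ p ∈ Z, DifferentiableAt ℝ (fderiv ℝ Pc) p := fun p hp =>
    ((hPcat p hp).fderiv_right (m := (⊤ : ℕ∞)) (by simp)).differentiableAt (by simp)
  have hΓd : Differentiable ℝ Γ := hΓ.differentiable (by simp)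
  have happ1 : ∀ p v, Pc p (Pinv p v) = v := by
    intro p v; simp [hPcdef, hPinvdef]
  have happ2 : ∀ p v, Pinv p (Pc p v) = v := by
    intro p v; simp [hPcdef, hPinvdef]
  have hdirψD : ∀ (w : ℝ × Λ), ∀ p ∈ Z, DifferentiableAt ℝ (fun q => fderiv ℝ ψ q w) p :=
    fun w p hp => (hψ2 p hp).clm_apply (differentiableAt_const w)
  have hdirPcD : ∀ (w : ℝ × Λ), ∀ p ∈ Z, DifferentiableAt ℝ (fun q => fderiv ℝ Pc q w) p :=
    fun w p hp => (hPc2 p hp).clm_apply (differentiableAt_const w)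
  have hSymψ : ∀ p ∈ Z, ∀ v w,
      fderiv ℝ (fderiv ℝ ψ) p v w = fderiv ℝ (fderiv ℝ ψ) p w v := fun p hp =>
    (hψat p hp).isSymmSndFDerivAt (by rw [minSmoothness_of_isRCLikeNormedField]; exact WithTop.coe_le_coe.mpr le_top)
  have hSymPc : ∀ p ∈ Z, ∀ v w,
      fderiv ℝ (fderiv ℝ Pc) p v w = fderiv ℝ (fderiv ℝ Pc) p w v := fun p hp =>
    (hPcat p hp).isSymmSndFDerivAt (by rw [minSmoothness_of_isRCLikeNormedField]; exact WithTop.coe_le_coe.mpr le_top)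
  -- the parallel transport ODE, operator form
  have hOde : ∀ p ∈ Z, fderiv ℝ Pc p ((1:ℝ), (0:Λ)) =
      -((Γ (ψ p) (fderiv ℝ ψ p ((1:ℝ), (0:Λ)))).comp (Pc p)) := by
    rintro ⟨t, lam⟩ hp
    ext v
    have h1 : HasDerivAt (fun s => Pc (s, lam)) (fderiv ℝ Pc (t, lam) (1, 0)) t :=
      dirT (hPcD _ hp)
    have h2 : HasDerivAt (fun s => Pc (s, lam) v) ((fderiv ℝ Pc (t, lam) (1, 0)) v) t := by
      simpa using h1.clm_apply (hasDerivAt_const t v)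
    have h3 := hPode lam v t hp
    rw [fderivWithin_of_isOpen hZ hp] at h3
    have h4 : HasDerivAt (fun s => Pc (s, lam) v)
        (-(Γ (ψ (t, lam)) (fderiv ℝ ψ (t, lam) (1, 0)) (Pc (t, lam) v))) t := by
      simpa [hPcdef] using h3
    have := h2.unique h4
    simpa using this
  -- derivative of the inverse
  have hInv : ∀ p ∈ Z, ∀ ζ, ∀ v, fderiv ℝ Pinv p ζ v =
      -(Pinv p ((fderiv ℝ Pc p ζ) (Pinv p v))) := by
    intro p hp ζ v
    have hcomp : HasFDerivAt (fun q => (Pc q).comp (Pinv q))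
        ((ContinuousLinearMap.compL ℝ M M M (Pc p)).comp (fderiv ℝ Pinv p) +
          ((ContinuousLinearMap.compL ℝ M M M).flip (Pinv p)).comp (fderiv ℝ Pc p)) p :=
      (hPcD p hp).hasFDerivAt.clm_comp (hPiD p hp).hasFDerivAt
    have hconst : (fun q : ℝ × Λ => (Pc q).comp (Pinv q)) =
        fun _ => ContinuousLinearMap.id ℝ M := by
      funext q; ext w; simp [happ1]
    rw [hconst] at hcomp
    have h0 := (hasFDerivAt_const (ContinuousLinearMap.id ℝ M) p).unique hcomp
    have h1 := congrArg (fun T => T ζ v) h0.symm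
    simp only [ContinuousLinearMap.add_apply, ContinuousLinearMap.coe_comp',
      Function.comp_apply, ContinuousLinearMap.compL_apply, ContinuousLinearMap.flip_apply,
      ContinuousLinearMap.zero_apply] at h1
    -- h1 : Pc p (fderiv Pinv p ζ v) + fderiv Pc p ζ (Pinv p v) = 0
    have h2 : Pc p ((fderiv ℝ Pinv p ζ) v) = -((fderiv ℝ Pc p ζ) (Pinv p v)) := by
      linear_combination (norm := module) h1
    have h3 := congrArg (fun w => Pinv p w) h2
    simpa [happ2] using h3
  -- the λ-direction antisymmetry via the curvature ODE
  have hMAIN2 : ∀ p ∈ Z, ∀ (mu : Λ) (x y : M),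
      g₀ (((Pinv p).comp (fderiv ℝ Pc p ((0:ℝ), mu)
          + (Γ (ψ p) (fderiv ℝ ψ p ((0:ℝ), mu))).comp (Pc p))) x) y
        + g₀ x (((Pinv p).comp (fderiv ℝ Pc p ((0:ℝ), mu)
          + (Γ (ψ p) (fderiv ℝ ψ p ((0:ℝ), mu))).comp (Pc p))) y) = 0 := by
    rintro ⟨t, lam⟩ hp mu x y
    have hz0 : ((0:ℝ), lam) ∈ Z := (hslice lam).1
    set q : ℝ → ℝ := fun s => g₀ (((Pinv (s, lam)).comp (fderiv ℝ Pc (s, lam) ((0:ℝ), mu)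
          + (Γ (ψ (s, lam)) (fderiv ℝ ψ (s, lam) ((0:ℝ), mu))).comp (Pc (s, lam)))) x) y
        + g₀ x (((Pinv (s, lam)).comp (fderiv ℝ Pc (s, lam) ((0:ℝ), mu)
          + (Γ (ψ (s, lam)) (fderiv ℝ ψ (s, lam) ((0:ℝ), mu))).comp (Pc (s, lam)))) y) with hqdef
    -- q vanishes at 0
    have hψ00 : fderiv ℝ ψ ((0:ℝ), lam) ((0:ℝ), mu) = 0 := by
      have h1 : HasDerivAt (fun s : ℝ => ψ (((0:ℝ), lam) + s • ((0:ℝ), mu)))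
          (fderiv ℝ ψ ((0:ℝ), lam) ((0:ℝ), mu)) 0 := dirD (hψD _ hz0) _
      have h2 : (fun s : ℝ => ψ (((0:ℝ), lam) + s • ((0:ℝ), mu))) = fun _ => m₀ := by
        funext s
        show ψ ((0:ℝ) + s • (0:ℝ), lam + s • mu) = m₀
        simp [hψ0]
      rw [h2] at h1
      exact h1.unique (hasDerivAt_const 0 m₀)
    have hPc00 : fderiv ℝ Pc ((0:ℝ), lam) ((0:ℝ), mu) = 0 := by
      have h1 : HasDerivAt (fun s : ℝ => Pc (((0:ℝ), lam) + s • ((0:ℝ), mu)))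
          (fderiv ℝ Pc ((0:ℝ), lam) ((0:ℝ), mu)) 0 := dirD (hPcD _ hz0) _
      have h2 : (fun s : ℝ => Pc (((0:ℝ), lam) + s • ((0:ℝ), mu)))
          = fun _ => ContinuousLinearMap.id ℝ M := by
        funext s
        show Pc ((0:ℝ) + s • (0:ℝ), lam + s • mu) = _
        have h3 : ((0:ℝ) + s • (0:ℝ), lam + s • mu) = ((0:ℝ), lam + s • mu) := by simp
        rw [h3, hPcdef]
        simp [hP0]
      rw [h2] at h1
      exact h1.unique (hasDerivAt_const 0 _)
    have hq0 : q 0 = 0 := by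
      simp [hqdef, hψ00, hPc00]
    -- q has zero derivative on the slice
    have hqder : ∀ τ : ℝ, (τ, lam) ∈ Z → HasDerivAt q 0 τ := by
      intro τ hpτ
      set x₀ : M := ψ (τ, lam) with hx₀
      set uu : M := fderiv ℝ ψ (τ, lam) ((1:ℝ), (0:Λ)) with huu
      set vv : M := fderiv ℝ ψ (τ, lam) ((0:ℝ), mu) with hvv
      set ww : M := fderiv ℝ (fun q' => fderiv ℝ ψ q' ((1:ℝ), (0:Λ))) (τ, lam) ((0:ℝ), mu) with hww
      set Bp : M →L[ℝ] M := fderiv ℝ Pc (τ, lam) ((0:ℝ), mu) with hBp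
      set curv : M →L[ℝ] M := fderiv ℝ Γ x₀ uu vv - fderiv ℝ Γ x₀ vv uu
        + (Γ x₀ uu).comp (Γ x₀ vv) - (Γ x₀ vv).comp (Γ x₀ uu) with hcurv
      have hu : HasDerivAt (fun s => ψ (s, lam)) uu τ := dirT (hψD _ hpτ)
      have hPcl : HasDerivAt (fun s => Pc (s, lam)) (-((Γ x₀ uu).comp (Pc (τ, lam)))) τ := by
        have h := dirT (hPcD _ hpτ)
        rwa [hOde _ hpτ] at h
      have hPil : HasDerivAt (fun s => Pinv (s, lam)) ((Pinv (τ, lam)).comp (Γ x₀ uu)) τ := by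
        have h := dirT (hPiD _ hpτ)
        have h2 : fderiv ℝ Pinv (τ, lam) ((1:ℝ), (0:Λ)) = (Pinv (τ, lam)).comp (Γ x₀ uu) := by
          ext v
          rw [ContinuousLinearMap.comp_apply, hInv _ hpτ ((1:ℝ), (0:Λ)) v, hOde _ hpτ]
          simp [happ1, hx₀, huu]
        rwa [h2] at h
      have hvl : HasDerivAt (fun s => fderiv ℝ ψ (s, lam) ((0:ℝ), mu)) ww τ := by
        have h1 := dirT (hψ2 _ hpτ)
        have h2 : HasDerivAt (fun s => fderiv ℝ ψ (s, lam) ((0:ℝ), mu))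
            ((fderiv ℝ (fderiv ℝ ψ) (τ, lam) ((1:ℝ), (0:Λ))) ((0:ℝ), mu)) τ := by
          simpa using h1.clm_apply (hasDerivAt_const τ ((0:ℝ), mu))
        rw [hSymψ _ hpτ ((1:ℝ), (0:Λ)) ((0:ℝ), mu),
          ← fderiv_eval_dir (hψ2 _ hpτ) ((1:ℝ), (0:Λ)) ((0:ℝ), mu)] at h2
        exact h2
      -- derivative of the mixed `fderiv Pc · (0,mu)` term, via Clairaut and the ODE
      have hBl : HasDerivAt (fun s => fderiv ℝ Pc (s, lam) ((0:ℝ), mu))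
          (-((fderiv ℝ Γ x₀ vv uu + Γ x₀ ww).comp (Pc (τ, lam)) + (Γ x₀ uu).comp Bp)) τ := by
        have h1 := dirT (F := ℝ × Λ →L[ℝ] M →L[ℝ] M) (hPc2 _ hpτ)
        have h2 : HasDerivAt (fun s => fderiv ℝ Pc (s, lam) ((0:ℝ), mu))
            ((fderiv ℝ (fderiv ℝ Pc) (τ, lam) ((1:ℝ), (0:Λ))) ((0:ℝ), mu)) τ := by
          simpa using h1.clm_apply (hasDerivAt_const τ ((0:ℝ), mu))
        rw [hSymPc _ hpτ ((1:ℝ), (0:Λ)) ((0:ℝ), mu),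
          ← fderiv_eval_dir (hPc2 _ hpτ) ((1:ℝ), (0:Λ)) ((0:ℝ), mu)] at h2
        have hEv : (fun q' => fderiv ℝ Pc q' ((1:ℝ), (0:Λ)))
            =ᶠ[nhds (τ, lam)]
              fun q' => -((Γ (ψ q') (fderiv ℝ ψ q' ((1:ℝ), (0:Λ)))).comp (Pc q')) := by
          filter_upwards [memZ _ hpτ] with q' hq' using hOde q' hq'
        rw [hEv.fderiv_eq] at h2
        -- directional derivative of the RHS in the λ-direction
        have hψl2 : HasDerivAt (fun s : ℝ => ψ ((τ, lam) + s • ((0:ℝ), mu))) vv 0 :=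
          dirD (hψD _ hpτ) _
        have hΓl2 : HasDerivAt (fun s : ℝ => Γ (ψ ((τ, lam) + s • ((0:ℝ), mu))))
            (fderiv ℝ Γ x₀ vv) 0 := by
          simpa [Function.comp_def] using
            (hΓd x₀).hasFDerivAt.comp_hasDerivAt_of_eq (l := Γ) 0 hψl2 (by simp [hx₀])
        have hul2 : HasDerivAt
            (fun s : ℝ => fderiv ℝ ψ ((τ, lam) + s • ((0:ℝ), mu)) ((1:ℝ), (0:Λ))) ww 0 :=
          dirD (hdirψD _ _ hpτ) _
        have hΓul2 : HasDerivAt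
            (fun s : ℝ => Γ (ψ ((τ, lam) + s • ((0:ℝ), mu)))
              (fderiv ℝ ψ ((τ, lam) + s • ((0:ℝ), mu)) ((1:ℝ), (0:Λ))))
            (fderiv ℝ Γ x₀ vv uu + Γ x₀ ww) 0 := by
          have h := hΓl2.clm_apply hul2
          simpa [hx₀, huu] using h
        have hPcl2 : HasDerivAt (fun s : ℝ => Pc ((τ, lam) + s • ((0:ℝ), mu))) Bp 0 :=
          dirD (hPcD _ hpτ) _
        have hRHSl2 : HasDerivAt (fun s : ℝ =>
            -((Γ (ψ ((τ, lam) + s • ((0:ℝ), mu)))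
                (fderiv ℝ ψ ((τ, lam) + s • ((0:ℝ), mu)) ((1:ℝ), (0:Λ)))).comp
              (Pc ((τ, lam) + s • ((0:ℝ), mu)))))
            (-((fderiv ℝ Γ x₀ vv uu + Γ x₀ ww).comp (Pc (τ, lam)) + (Γ x₀ uu).comp Bp)) 0 := by
          have h := (hΓul2.clm_comp hPcl2).neg
          simpa [hx₀, huu, Pi.neg_def] using h
        have hRHSd : DifferentiableAt ℝ
            (fun q' => -((Γ (ψ q') (fderiv ℝ ψ q' ((1:ℝ), (0:Λ)))).comp (Pc q'))) (τ, lam) := by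
          apply DifferentiableAt.neg
          apply DifferentiableAt.clm_comp _ (hPcD _ hpτ)
          apply DifferentiableAt.clm_apply _ (hdirψD _ _ hpτ)
          exact (hΓd (ψ (τ, lam))).comp _ (hψD _ hpτ)
        have h5 := (dirD hRHSd ((0:ℝ), mu)).unique hRHSl2
        rw [h5] at h2
        exact h2
      have hΓul : HasDerivAt (fun s => Γ (ψ (s, lam))) (fderiv ℝ Γ x₀ uu) τ := by
        simpa [Function.comp_def] using (hΓd x₀).hasFDerivAt.comp_hasDerivAt_of_eq (l := Γ) τ hu (by simp [hx₀])
      have hΓvl : HasDerivAt (fun s => Γ (ψ (s, lam)) (fderiv ℝ ψ (s, lam) ((0:ℝ), mu)))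
          (fderiv ℝ Γ x₀ uu vv + Γ x₀ ww) τ := by
        have h := hΓul.clm_apply hvl
        simpa [hx₀, hvv] using h
      have hCl : HasDerivAt
          (fun s => (Γ (ψ (s, lam)) (fderiv ℝ ψ (s, lam) ((0:ℝ), mu))).comp (Pc (s, lam)))
          ((fderiv ℝ Γ x₀ uu vv + Γ x₀ ww).comp (Pc (τ, lam))
            + (Γ x₀ vv).comp (-((Γ x₀ uu).comp (Pc (τ, lam))))) τ := by
        have h := hΓvl.clm_comp hPcl
        simpa [hx₀, hvv] using h
      have hQl := hPil.clm_comp (hBl.add hCl)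
      have hQl' : HasDerivAt (fun s => (Pinv (s, lam)).comp (fderiv ℝ Pc (s, lam) ((0:ℝ), mu)
            + (Γ (ψ (s, lam)) (fderiv ℝ ψ (s, lam) ((0:ℝ), mu))).comp (Pc (s, lam))))
          ((Pinv (τ, lam)).comp (curv.comp (Pc (τ, lam)))) τ := by
        convert hQl using 1
        · rfl
        rw [hcurv]
        ext ξ
        simp only [ContinuousLinearMap.comp_apply, ContinuousLinearMap.add_apply,
          ContinuousLinearMap.sub_apply, ContinuousLinearMap.neg_apply, map_add, map_neg, map_sub,
          Pi.add_apply]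
        abel
      have hgx : HasDerivAt (fun s => g₀ (((Pinv (s, lam)).comp (fderiv ℝ Pc (s, lam) ((0:ℝ), mu)
            + (Γ (ψ (s, lam)) (fderiv ℝ ψ (s, lam) ((0:ℝ), mu))).comp (Pc (s, lam)))) x) y)
          (g₀ (((Pinv (τ, lam)).comp (curv.comp (Pc (τ, lam)))) x) y) τ := by
        have hx1 : HasDerivAt (fun s => ((Pinv (s, lam)).comp (fderiv ℝ Pc (s, lam) ((0:ℝ), mu)
              + (Γ (ψ (s, lam)) (fderiv ℝ ψ (s, lam) ((0:ℝ), mu))).comp (Pc (s, lam)))) x)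
            (((Pinv (τ, lam)).comp (curv.comp (Pc (τ, lam)))) x) τ := by
          simpa using hQl'.clm_apply (hasDerivAt_const τ x)
        have hg1 := g₀.hasFDerivAt.comp_hasDerivAt τ hx1
        simpa [Function.comp] using hg1.clm_apply (hasDerivAt_const τ y)
      have hgy : HasDerivAt (fun s => g₀ x (((Pinv (s, lam)).comp (fderiv ℝ Pc (s, lam) ((0:ℝ), mu)
            + (Γ (ψ (s, lam)) (fderiv ℝ ψ (s, lam) ((0:ℝ), mu))).comp (Pc (s, lam)))) y))
          (g₀ x (((Pinv (τ, lam)).comp (curv.comp (Pc (τ, lam)))) y)) τ := by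
        have hy1 : HasDerivAt (fun s => ((Pinv (s, lam)).comp (fderiv ℝ Pc (s, lam) ((0:ℝ), mu)
              + (Γ (ψ (s, lam)) (fderiv ℝ ψ (s, lam) ((0:ℝ), mu))).comp (Pc (s, lam)))) y)
            (((Pinv (τ, lam)).comp (curv.comp (Pc (τ, lam)))) y) τ := by
          simpa using hQl'.clm_apply (hasDerivAt_const τ y)
        simpa [Function.comp_def] using (g₀ x).hasFDerivAt.comp_hasDerivAt τ hy1
      have hsum := hgx.add hgy
      have hzero : g₀ (((Pinv (τ, lam)).comp (curv.comp (Pc (τ, lam)))) x) y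
          + g₀ x (((Pinv (τ, lam)).comp (curv.comp (Pc (τ, lam)))) y) = 0 := by
        have hA := hanti (τ, lam) hpτ uu vv x y
        simp only [curvOf] at hA
        rw [hcurv]
        simp only [ContinuousLinearMap.comp_apply, ContinuousLinearMap.add_apply,
          ContinuousLinearMap.sub_apply, hPcdef, hPinvdef, ContinuousLinearEquiv.coe_coe,
          hx₀]
        simp only [hx₀, huu, hvv] at hA
        linarith [hA]
      rw [hqdef]
      have h9 := hsum
      rw [hzero] at h9
      exact h9
    -- constancy on the interval
    have hsub : Set.uIcc (0:ℝ) t ⊆ {s : ℝ | (s, lam) ∈ Z} :=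
      (hslice lam).2.uIcc_subset (by exact hz0) (by exact hp)
    have hbound : ‖q t - q 0‖ ≤ 0 * ‖t - 0‖ := by
      refine (convex_uIcc (0:ℝ) t).norm_image_sub_le_of_norm_hasDerivWithin_le
        (f' := fun _ => (0:ℝ)) (fun s hs => (hqder s (hsub hs)).hasDerivWithinAt)
        (fun s hs => by simp) Set.left_mem_uIcc Set.right_mem_uIcc
    have hqt : q t = 0 := by
      have h1 : ‖q t - q 0‖ ≤ 0 := by simpa using hbound
      have h2 : ‖q t - q 0‖ = 0 := le_antisymm h1 (norm_nonneg _)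
      have h3 : q t - q 0 = 0 := by simpa using h2
      rw [hq0] at h3
      simpa using h3
    simpa only [hqdef] using hqt
  -- the t-direction identity and the full directional identity
  have hMAINfull : ∀ p ∈ Z, ∀ ζ : ℝ × Λ, ∀ x y : M,
      g₀ (Pinv p ((fderiv ℝ Pc p ζ) x + (Γ (ψ p) (fderiv ℝ ψ p ζ)) (Pc p x))) y
        + g₀ x (Pinv p ((fderiv ℝ Pc p ζ) y + (Γ (ψ p) (fderiv ℝ ψ p ζ)) (Pc p y))) = 0 := by
    intro p hp ζ x y
    have hdec : ζ = ζ.1 • ((1:ℝ), (0:Λ)) + ((0:ℝ), ζ.2) := by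
      ext <;> simp
    have hvecx : ∀ w : M, (fderiv ℝ Pc p ζ) w + (Γ (ψ p) (fderiv ℝ ψ p ζ)) (Pc p w)
        = (fderiv ℝ Pc p ((0:ℝ), ζ.2)) w + (Γ (ψ p) (fderiv ℝ ψ p ((0:ℝ), ζ.2))) (Pc p w) := by
      intro w
      conv_lhs => rw [hdec]
      rw [map_add (fderiv ℝ Pc p), map_smul (fderiv ℝ Pc p), map_add (fderiv ℝ ψ p),
        map_smul (fderiv ℝ ψ p), hOde p hp]
      simp only [map_add, map_smul, ContinuousLinearMap.add_apply, ContinuousLinearMap.smul_apply,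
        ContinuousLinearMap.neg_apply, ContinuousLinearMap.comp_apply, smul_neg]
      abel
    have h2 := hMAIN2 p hp ζ.2 x y
    rw [hvecx x, hvecx y]
    simp only [ContinuousLinearMap.comp_apply, ContinuousLinearMap.add_apply, map_add] at h2 ⊢
    linarith [h2]
  -- differentiability of the pulled-back metric coefficient
  have hhD : ∀ p ∈ Z, ∀ a b : M,
      DifferentiableAt ℝ (fun q => g₀ (Pinv q a) (Pinv q b)) p := by
    intro p hp a b
    apply DifferentiableAt.clm_apply
    · exact (g₀.differentiable.differentiableAt).comp p
        ((hPiD p hp).clm_apply (differentiableAt_const a))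
    · exact (hPiD p hp).clm_apply (differentiableAt_const b)
  -- the key derivative formula for the metric coefficients
  have hKEY : ∀ p ∈ Z, ∀ ζ : ℝ × Λ, ∀ a b : M,
      fderiv ℝ (fun q => g₀ (Pinv q a) (Pinv q b)) p ζ
        = g₀ (Pinv p ((Γ (ψ p) (fderiv ℝ ψ p ζ)) a)) (Pinv p b)
          + g₀ (Pinv p a) (Pinv p ((Γ (ψ p) (fderiv ℝ ψ p ζ)) b)) := by
    intro p hp ζ a b
    have hPia : HasDerivAt (fun s : ℝ => Pinv (p + s • ζ) a) ((fderiv ℝ Pinv p ζ) a) 0 := by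
      simpa using (dirD (hPiD p hp) ζ).clm_apply (hasDerivAt_const 0 a)
    have hPib : HasDerivAt (fun s : ℝ => Pinv (p + s • ζ) b) ((fderiv ℝ Pinv p ζ) b) 0 := by
      simpa using (dirD (hPiD p hp) ζ).clm_apply (hasDerivAt_const 0 b)
    have hga : HasDerivAt (fun s : ℝ => g₀ (Pinv (p + s • ζ) a))
        (g₀ ((fderiv ℝ Pinv p ζ) a)) 0 := by
      simpa [Function.comp_def] using g₀.hasFDerivAt.comp_hasDerivAt 0 hPia
    have hline : HasDerivAt (fun s : ℝ => g₀ (Pinv (p + s • ζ) a) (Pinv (p + s • ζ) b))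
        (g₀ ((fderiv ℝ Pinv p ζ) a) (Pinv p b) + g₀ (Pinv p a) ((fderiv ℝ Pinv p ζ) b)) 0 := by
      simpa using hga.clm_apply hPib
    have h6 := (dirD (hhD p hp a b) ζ).unique hline
    rw [h6, hInv p hp ζ a, hInv p hp ζ b]
    have h7 := hMAINfull p hp ζ (Pinv p a) (Pinv p b)
    rw [happ1, happ1] at h7
    simp only [map_add, map_neg, ContinuousLinearMap.add_apply, ContinuousLinearMap.neg_apply] at h7 ⊢
    linarith [h7]
  -- final assembly
  refine ⟨?_, ?_, ?_⟩
  · intro m hm a b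
    rw [hGval (α m) a b, hGval (α m) b a]
    exact hg₀symm _ _
  · intro m hm a ha
    have h1 : ∀ b, g₀ ((P (α m)).symm a) b = 0 := by
      intro b
      have h2 := ha (P (α m) b)
      rw [hGval] at h2
      simpa using h2
    have h2 := hg₀nondeg _ h1
    have h3 := congrArg (fun w => P (α m) w) h2
    simpa using h3
  · intro m hm z a b
    have hpZ := hαZ m hm
    have hαat : DifferentiableAt ℝ α m := (hα.contDiffAt (hV.mem_nhds hm)).differentiableAt (by simp)
    have hAd : DifferentiableAt ℝ (fun m' => ((P (α m')).symm : M →L[ℝ] M)) m :=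
      (hPiD _ hpZ).comp m hαat
    have hflipD : ∀ (w : M → (M →L[ℝ] M →L[ℝ] ℝ)), DifferentiableAt ℝ w m →
        DifferentiableAt ℝ (fun m' => (w m').flip) m := by
      intro w hw
      have hL : Differentiable ℝ (fun f : M →L[ℝ] M →L[ℝ] ℝ =>
          (ContinuousLinearMap.flipₗᵢ ℝ M M ℝ).toLinearIsometry.toContinuousLinearMap f) :=
        ContinuousLinearMap.differentiable _
      exact DifferentiableAt.comp (𝕜 := ℝ) (F := M →L[ℝ] M →L[ℝ] ℝ)
        (G := M →L[ℝ] M →L[ℝ] ℝ) (f := w) m (hL (w m)) hw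
    have hd1 : DifferentiableAt ℝ (fun m' => g₀.comp (((P (α m')).symm : M →L[ℝ] M))) m :=
      (differentiableAt_const g₀).clm_comp hAd
    have hd2 := hflipD _ hd1
    have hd3 : DifferentiableAt ℝ (fun m' =>
        ((g₀.comp (((P (α m')).symm : M →L[ℝ] M))).flip).comp
          (((P (α m')).symm : M →L[ℝ] M))) m := hd2.clm_comp hAd
    have hd4 := hflipD _ hd3
    have hGGrw : (fun m' =>
        ((ContinuousLinearMap.compL ℝ M M ℝ).flip (((P (α m')).symm : M →L[ℝ] M))).comp
          (g₀.comp (((P (α m')).symm : M →L[ℝ] M))))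
        = fun m' => (((g₀.comp (((P (α m')).symm : M →L[ℝ] M))).flip).comp
            (((P (α m')).symm : M →L[ℝ] M))).flip := by
      funext m'; ext a b
      simp [ContinuousLinearMap.compL_apply, ContinuousLinearMap.flip_apply]
    have hGd : DifferentiableAt ℝ (fun m' =>
        ((ContinuousLinearMap.compL ℝ M M ℝ).flip (((P (α m')).symm : M →L[ℝ] M))).comp
          (g₀.comp (((P (α m')).symm : M →L[ℝ] M)))) m := by
      rw [hGGrw]; exact hd4
    rw [fderivWithin_of_isOpen hV hm]
    -- commute evaluation at `a`, `b` with the derivative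
    have hev1 : fderiv ℝ (fun m' =>
        (((ContinuousLinearMap.compL ℝ M M ℝ).flip (((P (α m')).symm : M →L[ℝ] M))).comp
          (g₀.comp (((P (α m')).symm : M →L[ℝ] M)))) a) m z
        = fderiv ℝ (fun m' =>
        ((ContinuousLinearMap.compL ℝ M M ℝ).flip (((P (α m')).symm : M →L[ℝ] M))).comp
          (g₀.comp (((P (α m')).symm : M →L[ℝ] M)))) m z a := fderiv_eval_dir hGd a z
    have hev2 : fderiv ℝ (fun m' =>
        (((ContinuousLinearMap.compL ℝ M M ℝ).flip (((P (α m')).symm : M →L[ℝ] M))).comp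
          (g₀.comp (((P (α m')).symm : M →L[ℝ] M)))) a b) m z
        = fderiv ℝ (fun m' =>
        (((ContinuousLinearMap.compL ℝ M M ℝ).flip (((P (α m')).symm : M →L[ℝ] M))).comp
          (g₀.comp (((P (α m')).symm : M →L[ℝ] M)))) a) m z b :=
      fderiv_eval_dir (hGd.clm_apply (differentiableAt_const a)) b z
    rw [← hev1, ← hev2]
    -- rewrite the scalar coefficient function
    have hfeq : (fun m' =>
        (((ContinuousLinearMap.compL ℝ M M ℝ).flip (((P (α m')).symm : M →L[ℝ] M))).comp
          (g₀.comp (((P (α m')).symm : M →L[ℝ] M)))) a b)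
        = fun m' => g₀ (Pinv (α m') a) (Pinv (α m') b) := by
      funext m'
      rw [hGval]
      rfl
    rw [hfeq]
    -- chain rule through α
    have hcomp : fderiv ℝ (fun m' => g₀ (Pinv (α m') a) (Pinv (α m') b)) m
        = (fderiv ℝ (fun q => g₀ (Pinv q a) (Pinv q b)) (α m)).comp (fderiv ℝ α m) :=
      fderiv_comp m (hhD _ hpZ a b) hαat
    rw [hcomp]
    have hψα' : fderiv ℝ ψ (α m) (fderiv ℝ α m z) = z := by
      have hEv : (fun m' => ψ (α m')) =ᶠ[nhds m] id := by
        filter_upwards [hV.mem_nhds hm] with m' hm' using hψα m' hm'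
      have h1 : fderiv ℝ (fun m' => ψ (α m')) m = fderiv ℝ (id : M → M) m := hEv.fderiv_eq
      have h2 : fderiv ℝ (fun m' => ψ (α m')) m = (fderiv ℝ ψ (α m)).comp (fderiv ℝ α m) :=
        fderiv_comp m (hψD _ hpZ) hαat
      have h3 : (fderiv ℝ ψ (α m)).comp (fderiv ℝ α m) = ContinuousLinearMap.id ℝ M := by
        rw [← h2, h1, fderiv_id]
      calc fderiv ℝ ψ (α m) (fderiv ℝ α m z)
          = ((fderiv ℝ ψ (α m)).comp (fderiv ℝ α m)) z := rfl
        _ = z := by rw [h3]; rfl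
    rw [ContinuousLinearMap.comp_apply, hKEY (α m) hpZ (fderiv ℝ α m z) a b, hψα', hψα m hm]
    rw [hGval (α m) (Γ m z a) b, hGval (α m) a (Γ m z b)]
    rfl
end

section
/- Globalization principle: Let X be a Hausdorff, locally arc-connected, connected, and simply-connected topological space, and let P be a pre-sheaf over X satisfying the localization property, the uniqueness property, and the extension property. Then for every nonempty open connected subset V of X, the restriction map P_{X,V} : P(X) → P(V) is surjective. In particular, if P is nontrivial (P(U) ≠ ∅ for some nonempty open U), then P(X) ≠ ∅. -/
/-!
STATEMENT 19 (globalization principle for pre-sheaves).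

A pre-sheaf `P` on a topological space `X` assigns to each open set `U` a set `P U` and to
each inclusion `V ⊆ U` a restriction map, functorially.  (For convenience the data is
defined on all subsets; only its values on open sets are ever used in the hypotheses and
the conclusion, so this is equivalent to the usual notion.)

* localization property: for every family `𝒰` of open sets with union `U`, a member of
  `P U` is determined by its restrictions to the members of `𝒰`, and every compatible
  family of elements glues.
* uniqueness property: for `U` open connected and `V ⊆ U` open nonempty, restriction
  `P U → P V` is injective.
* extension property of an open set `U`: for `V ⊆ U` open connected nonempty, restriction
  `P U → P V` is surjective; `P` has the extension property if `X` is covered by such sets.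

Theorem: if `X` is Hausdorff, locally arc-connected, connected and simply-connected and `P`
has the three properties, then for every nonempty open connected `V ⊆ X` the restriction
`P X → P V` is surjective; in particular if `P` is nontrivial then `P X` is nonempty.
-/

/-- A pre-sheaf of sets on a topological space. -/
structure Presheaf' (X : Type*) [TopologicalSpace X] where
  obj : Set X → Type
  res : ∀ {U V : Set X}, V ⊆ U → obj U → obj V
  res_id : ∀ (U : Set X) (f : obj U), res (subset_refl U) f = f
  res_comp : ∀ {U V W : Set X} (hVU : V ⊆ U) (hWV : W ⊆ V) (f : obj U),
    res hWV (res hVU f) = res (hWV.trans hVU) f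

namespace Presheaf'

variable {X : Type*} [TopologicalSpace X] (P : Presheaf' X)

/-- The localization property of a pre-sheaf. -/
def Localization : Prop :=
  ∀ 𝒰 : Set (Set X), (∀ U ∈ 𝒰, IsOpen U) →
    (∀ f g : P.obj (⋃₀ 𝒰),
      (∀ U (hU : U ∈ 𝒰), P.res (Set.subset_sUnion_of_mem hU) f
        = P.res (Set.subset_sUnion_of_mem hU) g) → f = g) ∧
    (∀ sel : ∀ U ∈ 𝒰, P.obj U,
      (∀ U (hU : U ∈ 𝒰) (V : Set X) (hV : V ∈ 𝒰),
        P.res (Set.inter_subset_left : U ∩ V ⊆ U) (sel U hU)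
          = P.res (Set.inter_subset_right : U ∩ V ⊆ V) (sel V hV)) →
      ∃ f : P.obj (⋃₀ 𝒰), ∀ U (hU : U ∈ 𝒰),
        P.res (Set.subset_sUnion_of_mem hU) f = sel U hU)

/-- The uniqueness property of a pre-sheaf. -/
def Uniqueness : Prop :=
  ∀ U V : Set X, IsOpen U → IsPreconnected U → IsOpen V → V.Nonempty →
    ∀ h : V ⊆ U, Function.Injective (P.res h : P.obj U → P.obj V)

/-- An open set `U` has the extension property for `P`. -/
def HasExtension (U : Set X) : Prop :=
  ∀ V : Set X, IsOpen V → IsPreconnected V → V.Nonempty →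
    ∀ h : V ⊆ U, Function.Surjective (P.res h : P.obj U → P.obj V)

/-- The extension property of a pre-sheaf: `X` is covered by open sets having the
extension property. -/
def Extension : Prop :=
  ∀ x : X, ∃ U : Set X, IsOpen U ∧ x ∈ U ∧ P.HasExtension U

end Presheaf'

/-!
The germs of local sections of `P` form an étalé space over `X`. By the uniqueness property a
section over a connected open set is determined by any one of its germs, and by the extension
property every germ at a point of an extension neighbourhood is the germ of a section over that
neighbourhood; together these say that the étalé space is a covering space of `X`. As `X` is
simply connected and locally path-connected, the identity of `X` lifts through this covering to
a continuous section through any prescribed germ, and the localization property glues the germs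
of a continuous section into a global section.
-/

open Set

namespace Presheaf'

variable {X : Type*} [TopologicalSpace X] {P : Presheaf' X}

theorem res_eq_res_of_subset {U₁ U₂ W W' : Set X} {f : P.obj U₁} {g : P.obj U₂}
    {h₁ : W ⊆ U₁} {h₂ : W ⊆ U₂} (he : P.res h₁ f = P.res h₂ g) (hW : W' ⊆ W) :
    P.res (hW.trans h₁) f = P.res (hW.trans h₂) g := by
  rw [← P.res_comp h₁ hW, ← P.res_comp h₂ hW, he]

theorem res_injective_of_subset {U V : Set X} (hVU : V ⊆ U) (hUV : U ⊆ V) :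
    Function.Injective (P.res hVU) := fun f g he => by
  simpa only [P.res_comp, P.res_id] using congrArg (P.res hUV) he

structure LocalSection (P : Presheaf' X) where
  dom : Set X
  isOpen_dom : IsOpen dom
  val : P.obj dom

def Agree (x : X) (s t : P.LocalSection) : Prop :=
  ∃ W : Set X, IsOpen W ∧ x ∈ W ∧
    ∃ (hs : W ⊆ s.dom) (ht : W ⊆ t.dom), P.res hs s.val = P.res ht t.val

namespace Agree

variable {x : X} {s t u : P.LocalSection}

theorem refl (hx : x ∈ s.dom) : Agree x s s :=
  ⟨s.dom, s.isOpen_dom, hx, subset_rfl, subset_rfl, rfl⟩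

theorem symm (h : Agree x s t) : Agree x t s :=
  let ⟨W, hW, hxW, hs, ht, he⟩ := h
  ⟨W, hW, hxW, ht, hs, he.symm⟩

theorem trans (hst : Agree x s t) (htu : Agree x t u) : Agree x s u := by
  obtain ⟨W, hW, hxW, hs, ht, he⟩ := hst
  obtain ⟨W', hW', hxW', ht', hu, he'⟩ := htu
  exact ⟨W ∩ W', hW.inter hW', ⟨hxW, hxW'⟩, _, _,
    (res_eq_res_of_subset he inter_subset_left).trans
      (res_eq_res_of_subset he' inter_subset_right)⟩

end Agree

theorem isOpen_setOf_agree (s t : P.LocalSection) : IsOpen {x | Agree x s t} :=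
  isOpen_iff_forall_mem_open.2 fun _ ⟨W, hW, hxW, hs, ht, he⟩ =>
    ⟨W, fun _ hz => ⟨W, hW, hz, hs, ht, he⟩, hW, hxW⟩

def germSetoid (P : Presheaf' X) : Setoid {p : X × P.LocalSection // p.1 ∈ p.2.dom} where
  r p q := p.1.1 = q.1.1 ∧ Agree p.1.1 p.1.2 q.1.2
  iseqv :=
    { refl := fun p => ⟨rfl, .refl p.2⟩
      symm := fun ⟨hpq, h⟩ => ⟨hpq.symm, hpq ▸ h.symm⟩
      trans := fun ⟨hpq, h⟩ ⟨hqr, h'⟩ => ⟨hpq.trans hqr, h.trans (hpq ▸ h')⟩ }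

def Etale (P : Presheaf' X) : Type _ := Quotient P.germSetoid

def LocalSection.germ (s : P.LocalSection) (x : X) (hx : x ∈ s.dom) : P.Etale :=
  Quotient.mk _ ⟨(x, s), hx⟩

def Etale.proj : P.Etale → X :=
  Quotient.lift (fun p => p.1.1) fun _ _ h => h.1

theorem germ_eq_germ_iff {s t : P.LocalSection} {x : X} (hs : x ∈ s.dom) (ht : x ∈ t.dom) :
    s.germ x hs = t.germ x ht ↔ Agree x s t :=
  Quotient.eq.trans (and_iff_right rfl)

theorem Etale.exists_germ_eq (γ : P.Etale) : ∃ (s : P.LocalSection) (x : X) (hx : x ∈ s.dom),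
    s.germ x hx = γ :=
  Quotient.inductionOn γ fun p => ⟨p.1.2, p.1.1, p.2, rfl⟩

theorem germ_res {U W : Set X} (hU : IsOpen U) (hW : IsOpen W) (h : W ⊆ U) (f : P.obj U)
    {x : X} (hx : x ∈ W) :
    (⟨W, hW, P.res h f⟩ : P.LocalSection).germ x hx = (⟨U, hU, f⟩ : P.LocalSection).germ x (h hx) :=
  (germ_eq_germ_iff _ _).2 ⟨W, hW, hx, subset_rfl, h, P.res_comp _ _ _⟩

theorem germ_injective (huniq : P.Uniqueness) {U : Set X} (hU : IsOpen U)
    (hUc : IsPreconnected U) {f g : P.obj U} {x : X} (hx : x ∈ U)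
    (h : (⟨U, hU, f⟩ : P.LocalSection).germ x hx = (⟨U, hU, g⟩ : P.LocalSection).germ x hx) :
    f = g := by
  obtain ⟨W, hW, hxW, hWU, _, he⟩ := (germ_eq_germ_iff _ _).1 h
  exact huniq U W hU hUc hW ⟨x, hxW⟩ hWU he

theorem eq_of_germ_eq (hloc : P.Localization) {U : Set X} (hU : IsOpen U) {f g : P.obj U}
    (h : ∀ x (hx : x ∈ U),
      (⟨U, hU, f⟩ : P.LocalSection).germ x hx = (⟨U, hU, g⟩ : P.LocalSection).germ x hx) :
    f = g := by
  choose W hW hxW hWU _ he using fun x : U => (germ_eq_germ_iff _ _).1 (h x x.2)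
  have hcover : ⋃₀ range W = U :=
    subset_antisymm (sUnion_subset <| forall_mem_range.2 hWU)
      fun x hx => ⟨_, mem_range_self ⟨x, hx⟩, hxW ⟨x, hx⟩⟩
  refine res_injective_of_subset hcover.le hcover.ge <|
    (hloc _ (forall_mem_range.2 hW)).1 _ _ ?_
  rintro _ ⟨x, rfl⟩
  simpa only [P.res_comp] using he x

theorem exists_glue_of_germ_eq (hloc : P.Localization) {ι : Type*} (t : ι → P.LocalSection)
    (h : ∀ i j x (hi : x ∈ (t i).dom) (hj : x ∈ (t j).dom), (t i).germ x hi = (t j).germ x hj) :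
    ∃ F : P.obj (⋃ i, (t i).dom), ∀ i x (hx : x ∈ (t i).dom),
      (⟨_, isOpen_iUnion fun i => (t i).isOpen_dom, F⟩ : P.LocalSection).germ x
        (mem_iUnion_of_mem i hx) = (t i).germ x hx := by
  set 𝒰 := range fun i => (t i).dom
  have hop : ∀ U ∈ 𝒰, IsOpen U := forall_mem_range.2 fun i => (t i).isOpen_dom
  choose idx hidx using fun U (hU : U ∈ 𝒰) => hU
  let sel U (hU : U ∈ 𝒰) : P.obj U := P.res (hidx U hU).ge (t (idx U hU)).val
  have germ_sel U hU x (hx : x ∈ U) : (⟨U, hop U hU, sel U hU⟩ : P.LocalSection).germ x hx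
      = (t (idx U hU)).germ x ((hidx U hU).ge hx) :=
    germ_res (t (idx U hU)).isOpen_dom _ _ _ hx
  obtain ⟨F, hF⟩ := (hloc _ hop).2 sel fun U hU V hV =>
    eq_of_germ_eq hloc ((hop U hU).inter (hop V hV)) fun x hx => by
      rw [germ_res (hop U hU), germ_res (hop V hV), germ_sel, germ_sel, h]
  refine ⟨P.res (sUnion_range _).ge F, fun i x hx => ?_⟩
  rw [germ_res (isOpen_sUnion hop),
    ← germ_res _ (t i).isOpen_dom (subset_sUnion_of_mem (mem_range_self i)) _ hx,
    hF _ (mem_range_self i), germ_sel, h]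

def LocalSection.germs (s : P.LocalSection) : Set P.Etale :=
  range fun x : s.dom => s.germ x x.2

theorem LocalSection.mem_germs_iff {s : P.LocalSection} {γ : P.Etale} :
    γ ∈ s.germs ↔ ∃ x hx, s.germ x hx = γ :=
  ⟨fun ⟨x, hx⟩ => ⟨x, x.2, hx⟩, fun ⟨x, hx, h⟩ => ⟨⟨x, hx⟩, h⟩⟩

instance : TopologicalSpace P.Etale :=
  .generateFrom (range LocalSection.germs)

theorem LocalSection.isOpen_germs (s : P.LocalSection) : IsOpen s.germs :=
  TopologicalSpace.isOpen_generateFrom_of_mem ⟨s, rfl⟩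

theorem LocalSection.continuous_germ (s : P.LocalSection) :
    Continuous fun x : s.dom => s.germ x x.2 := by
  refine continuous_generateFrom_iff.2 ?_
  rintro _ ⟨t, rfl⟩
  convert (isOpen_setOf_agree s t).preimage continuous_subtype_val using 1
  ext x
  simp only [mem_preimage, mem_germs_iff, mem_ofPred_eq]
  constructor
  · rintro ⟨y, hy, h⟩
    obtain rfl : y = x := congrArg Etale.proj h
    exact ((germ_eq_germ_iff _ _).1 h).symm
  · intro h
    obtain ⟨W, -, hxW, -, hWt, -⟩ := id h
    exact ⟨x, hWt hxW, ((germ_eq_germ_iff _ _).2 h).symm⟩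

theorem Etale.continuous_proj : Continuous (Etale.proj : P.Etale → X) := by
  refine continuous_def.2 fun O hO => isOpen_iff_forall_mem_open.2 fun γ hγ => ?_
  obtain ⟨s, x, hx, rfl⟩ := γ.exists_germ_eq
  refine ⟨(⟨s.dom ∩ O, s.isOpen_dom.inter hO, P.res inter_subset_left s.val⟩ :
    P.LocalSection).germs, ?_, LocalSection.isOpen_germs _, ?_⟩
  · rintro _ ⟨⟨x, hx⟩, rfl⟩
    exact hx.2
  · exact LocalSection.mem_germs_iff.2 ⟨x, ⟨hx, hγ⟩, germ_res s.isOpen_dom _ _ _ _⟩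

theorem HasExtension.mono {U C : Set X} (hU : P.HasExtension U) (hCU : C ⊆ U) :
    P.HasExtension C := fun V hV hVc hVne hVC g => by
  obtain ⟨f, hf⟩ := hU V hV hVc hVne (hVC.trans hCU) g
  exact ⟨P.res hCU f, (P.res_comp _ _ _).trans hf⟩

theorem HasExtension.exists_germ_eq [LocallyPathConnectedSpace X] {C : Set X}
    (hC : P.HasExtension C) (hCo : IsOpen C) {γ : P.Etale} (hγ : γ.proj ∈ C) :
    ∃ f : P.obj C, (⟨C, hCo, f⟩ : P.LocalSection).germ γ.proj hγ = γ := by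
  obtain ⟨s, x, hx, rfl⟩ := γ.exists_germ_eq
  have hxsC : x ∈ s.dom ∩ C := ⟨hx, hγ⟩
  have hxB : x ∈ pathComponentIn (s.dom ∩ C) x := mem_pathComponentIn_self hxsC
  have hBs : pathComponentIn (s.dom ∩ C) x ⊆ s.dom ∩ C := pathComponentIn_subset
  obtain ⟨f, hf⟩ := hC _ ((s.isOpen_dom.inter hCo).pathComponentIn x)
    (isPathConnected_pathComponentIn hxsC).isConnected.isPreconnected ⟨x, hxB⟩
    (hBs.trans inter_subset_right) (P.res (hBs.trans inter_subset_left) s.val)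
  refine ⟨f, (germ_eq_germ_iff _ _).2 ?_⟩
  exact ⟨_, (s.isOpen_dom.inter hCo).pathComponentIn x, hxB, _, _, hf⟩

theorem isEvenlyCovered_proj (huniq : P.Uniqueness) {C : Set X} (hCo : IsOpen C)
    (hCc : IsPreconnected C)
    (hC : ∀ γ : P.Etale, (hγ : γ.proj ∈ C) →
      ∃ f : P.obj C, (⟨C, hCo, f⟩ : P.LocalSection).germ γ.proj hγ = γ)
    {x : X} (hx : x ∈ C) :
    IsEvenlyCovered (Etale.proj : P.Etale → X) x ((Etale.proj : P.Etale → X) ⁻¹' {x}) := by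
  let _ : TopologicalSpace (P.obj C) := ⊥
  have : DiscreteTopology (P.obj C) := ⟨rfl⟩
  -- each germ over `C` is the germ of exactly one section over `C`
  let ψ (p : C × P.obj C) : Etale.proj ⁻¹' C :=
    ⟨(⟨C, hCo, p.2⟩ : P.LocalSection).germ p.1 p.1.2, p.1.2⟩
  have hψ : Function.Bijective ψ := by
    refine ⟨?_, fun γ => ?_⟩
    · rintro ⟨y, f⟩ ⟨y', f'⟩ h
      obtain rfl : y = y' :=
        Subtype.ext (congrArg (fun γ : Etale.proj ⁻¹' C => Etale.proj γ.1) h)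
      exact congrArg (Prod.mk y) (germ_injective huniq hCo hCc y.2 (congrArg Subtype.val h))
    · obtain ⟨f, hf⟩ := hC γ.1 γ.2
      exact ⟨(⟨_, γ.2⟩, f), Subtype.ext hf⟩
  let e := Equiv.ofBijective ψ hψ
  have he_fst (γ) : ((e.symm γ).1 : X) = Etale.proj γ.1 := by
    conv_rhs => rw [← e.apply_symm_apply γ]
    rfl
  have he_snd (γ) (f : P.obj C) :
      (e.symm γ).2 = f ↔ γ.1 ∈ (⟨C, hCo, f⟩ : P.LocalSection).germs := by
    rw [LocalSection.mem_germs_iff]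
    constructor
    · rintro rfl
      exact ⟨_, _, congrArg Subtype.val (e.apply_symm_apply γ)⟩
    · rintro ⟨y, hy, h⟩
      rw [e.symm_apply_eq.2 (Subtype.ext h.symm : γ = ψ (⟨y, hy⟩, f))]
  have hψc : Continuous ψ := continuous_prod_of_discrete_right.2 fun f =>
    ((LocalSection.continuous_germ ⟨C, hCo, f⟩).subtype_mk _)
  have hinv : Continuous e.symm := by
    refine .prodMk ?_ (continuous_discrete_rng.2 fun f => ?_)
    · exact continuous_induced_rng.2 <|
        (Etale.continuous_proj.comp continuous_subtype_val).congr fun γ => (he_fst γ).symm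
    · convert (LocalSection.isOpen_germs ⟨C, hCo, f⟩).preimage continuous_subtype_val
      ext γ
      exact he_snd γ f
  exact IsEvenlyCovered.to_isEvenlyCovered_preimage ⟨inferInstance, C, hx, hCo,
    hCo.preimage Etale.continuous_proj, (Homeomorph.mk e hψc hinv).symm, he_fst⟩

theorem isCoveringMap_proj [LocallyPathConnectedSpace X] (huniq : P.Uniqueness)
    (hext : P.Extension) : IsCoveringMap (Etale.proj : P.Etale → X) := fun x => by
  obtain ⟨U, hUo, hxU, hU⟩ := hext x
  exact isEvenlyCovered_proj huniq (hUo.pathComponentIn x)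
    (isPathConnected_pathComponentIn hxU).isConnected.isPreconnected
    (fun _ => (hU.mono pathComponentIn_subset).exists_germ_eq (hUo.pathComponentIn x))
    (mem_pathComponentIn_self hxU)

theorem exists_germ_eq_of_continuous (hloc : P.Localization) {σ : X → P.Etale}
    (hσ : Continuous σ) (hσp : ∀ x, (σ x).proj = x) :
    ∃ F : P.obj univ, ∀ x,
      (⟨univ, isOpen_univ, F⟩ : P.LocalSection).germ x (mem_univ x) = σ x := by
  choose s y hy hs using fun x => (σ x).exists_germ_eq
  let O x := (s x).dom ∩ σ ⁻¹' (s x).germs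
  have hxO x : x ∈ O x := by
    have hyx : y x = x := (congrArg Etale.proj (hs x)).trans (hσp x)
    refine ⟨?_, LocalSection.mem_germs_iff.2 ⟨y x, hy x, hs x⟩⟩
    simpa only [hyx] using hy x
  let t x : P.LocalSection := ⟨O x, (s x).isOpen_dom.inter ((s x).isOpen_germs.preimage hσ),
    P.res inter_subset_left (s x).val⟩
  have hσt x z (hz : z ∈ O x) : (t x).germ z hz = σ z := by
    obtain ⟨w, hw, h⟩ := LocalSection.mem_germs_iff.1 hz.2
    obtain rfl : w = z := (congrArg Etale.proj h).trans (hσp z)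
    exact (germ_res _ _ _ _ hz).trans h
  obtain ⟨F, hF⟩ := exists_glue_of_germ_eq hloc t fun i j z hi hj =>
    (hσt i z hi).trans (hσt j z hj).symm
  have hcover : univ ⊆ ⋃ x, (t x).dom := fun x _ => mem_iUnion_of_mem x (hxO x)
  refine ⟨P.res hcover F, fun x => ?_⟩
  rw [germ_res (isOpen_iUnion fun x => (t x).isOpen_dom), hF x x (hxO x), hσt]

end Presheaf'

theorem globalization_principle_general
    {X : Type*} [TopologicalSpace X] [LocallyPathConnectedSpace X] [SimplyConnectedSpace X]
    (P : Presheaf' X)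
    (hloc : P.Localization) (huniq : P.Uniqueness) (hext : P.Extension) :
    (∀ V : Set X, IsOpen V → IsPreconnected V → V.Nonempty →
      Function.Surjective (P.res (Set.subset_univ V) : P.obj Set.univ → P.obj V)) ∧
    ((∃ U : Set X, IsOpen U ∧ U.Nonempty ∧ Nonempty (P.obj U)) →
      Nonempty (P.obj Set.univ)) := by
  have surj (V : Set X) (hV : IsOpen V) (hVc : IsPreconnected V) : V.Nonempty →
      Function.Surjective (P.res (Set.subset_univ V) : P.obj Set.univ → P.obj V) := by
    rintro ⟨v, hv⟩ g
    obtain ⟨σ, hσv, hσ⟩ :=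
      ((Presheaf'.isCoveringMap_proj huniq hext).existsUnique_continuousMap_lifts (.id X) v
        ((⟨V, hV, g⟩ : P.LocalSection).germ v hv) rfl).exists
    obtain ⟨F, hF⟩ := Presheaf'.exists_germ_eq_of_continuous hloc σ.continuous (congrFun hσ)
    refine ⟨F, Presheaf'.germ_injective huniq hV hVc hv ?_⟩
    rw [Presheaf'.germ_res isOpen_univ, hF, hσv]
  refine ⟨surj, ?_⟩
  rintro ⟨U, hU, ⟨x, hx⟩, ⟨f⟩⟩
  obtain ⟨F, -⟩ := surj _ (hU.pathComponentIn x)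
    (isPathConnected_pathComponentIn hx).isConnected.isPreconnected
    ⟨x, mem_pathComponentIn_self hx⟩ (P.res pathComponentIn_subset f)
  exact ⟨F⟩

theorem globalization_principle
    {X : Type*} [TopologicalSpace X] [T2Space X] [LocallyPathConnectedSpace X]
    [ConnectedSpace X] [SimplyConnectedSpace X]
    (P : Presheaf' X)
    (hloc : P.Localization) (huniq : P.Uniqueness) (hext : P.Extension) :
    (∀ V : Set X, IsOpen V → IsPreconnected V → V.Nonempty →
      Function.Surjective (P.res (Set.subset_univ V) : P.obj Set.univ → P.obj V)) ∧
    ((∃ U : Set X, IsOpen U ∧ U.Nonempty ∧ Nonempty (P.obj U)) →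
      Nonempty (P.obj Set.univ)) :=
  globalization_principle_general P hloc huniq hext
end
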